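/- arXiv:1101.1663 — 12 statements merged into one kernel-verified Lean document; each statement's English description precedes it below -/
import Mathlib

section
/- Let m ≥ 1 and let h : ℝ^m → ℝ^m be a linear map whose restriction to the open positive orthant ℝ^m_{>0} is a bijection of ℝ^m_{>0} onto itself. Then there exist a permutation σ of {1,…,m} and positive constants c_1,…,c_m such that h(x)_i = c_i · x_{σ(i)} for every x ∈ ℝ^m and every i; equivalently, the matrix of h is invertible and each of its rows and each of its columns contains exactly one nonzero entry, and that entry is positive. -/
/-!
The matrix of a linear map sending the open orthant into itself is nonnegative, by continuity:
the closed orthant is the closure of the open one. The range of `h` contains the open orthant,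
a nonempty open set, so `h` is invertible, and its inverse also preserves the orthant. For
nonnegative matrices `A B` with `A * B = B * A = 1`, two positive entries `k ≠ l` in a row of `A`
would force row `l` of `B` to vanish; so each row, and by transposing each column, of `A` has
exactly one positive entry.
-/

open Set Function

section Orthant

variable {ι : Type*}

lemma setOf_forall_pos_eq_pi : {x : ι → ℝ | ∀ j, 0 < x j} = univ.pi fun _ => Ioi 0 := by
  ext; simp

lemma isOpen_setOf_forall_pos [Finite ι] : IsOpen {x : ι → ℝ | ∀ j, 0 < x j} := by
  rw [setOf_forall_pos_eq_pi]
  exact isOpen_set_pi finite_univ fun _ _ => isOpen_Ioi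

lemma closure_setOf_forall_pos : closure {x : ι → ℝ | ∀ j, 0 < x j} = {x | ∀ j, 0 ≤ x j} := by
  rw [setOf_forall_pos_eq_pi, closure_pi_set]
  ext; simp [Pi.le_def]

end Orthant

lemma LinearMap.surjective_of_isOpen_subset_range {𝕜 E F : Type*} [NontriviallyNormedField 𝕜]
    [AddCommGroup E] [Module 𝕜 E] [NormedAddCommGroup F] [NormedSpace 𝕜 F] (f : E →ₗ[𝕜] F)
    {U : Set F} (hU : IsOpen U) (hne : U.Nonempty) (hsub : U ⊆ range f) : Surjective f := by
  rw [← LinearMap.range_eq_top]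
  obtain ⟨y, hy⟩ := hne
  exact (LinearMap.range f).eq_top_of_nonempty_interior'
    ⟨y, interior_mono hsub (by rwa [hU.interior_eq])⟩

lemma LinearMap.toMatrix'_nonneg_of_mapsTo {ι κ : Type*} [Fintype ι] [DecidableEq ι]
    (f : (ι → ℝ) →ₗ[ℝ] κ → ℝ) (hf : MapsTo f {x | ∀ j, 0 < x j} {y | ∀ i, 0 < y i})
    (i : κ) (j : ι) : 0 ≤ LinearMap.toMatrix' f i j := by
  have hf' := hf.closure f.continuous_of_finiteDimensional
  rw [closure_setOf_forall_pos, closure_setOf_forall_pos] at hf'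
  exact hf' (fun k => by by_cases hk : k = j <;> simp [hk]) i

namespace Matrix

variable {n R : Type*} [Fintype n] [CommRing R] [LinearOrder R]
  [IsStrictOrderedRing R] {A B : Matrix n n R}

lemma mul_apply_eq_zero_iff_of_nonneg (hA : ∀ i j, 0 ≤ A i j) (hB : ∀ i j, 0 ≤ B i j)
    {i j : n} : (A * B) i j = 0 ↔ ∀ k, A i k * B k j = 0 := by
  simp [mul_apply, Finset.sum_eq_zero_iff_of_nonneg fun k _ => mul_nonneg (hA i k) (hB k j)]

variable [DecidableEq n]

lemma existsUnique_pos_of_nonneg_of_mul_eq_one (hA : ∀ i j, 0 ≤ A i j) (hB : ∀ i j, 0 ≤ B i j)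
    (hAB : A * B = 1) (hBA : B * A = 1) (i : n) : ∃! k, 0 < A i k := by
  obtain ⟨k, hk⟩ : ∃ k, 0 < A i k := by
    by_contra! h
    have hii : (A * B) i i = 1 := by simp [hAB]
    simp [mul_apply, fun k => le_antisymm (h k) (hA i k)] at hii
  refine ⟨k, hk, fun l hl => by_contra fun hlk => ?_⟩
  -- Row `l` of `B` vanishes: at `i` because `(B * A) l k = 0`, elsewhere because `(A * B) i j = 0`.
  have hBl : ∀ j, B l j = 0 := by
    intro j
    rcases eq_or_ne j i with rfl | hji
    · have := (mul_apply_eq_zero_iff_of_nonneg hB hA).1 (by rw [hBA, one_apply_ne hlk]) j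
      exact (mul_eq_zero.1 this).resolve_right hk.ne'
    · have := (mul_apply_eq_zero_iff_of_nonneg hA hB).1 (by rw [hAB, one_apply_ne hji.symm]) l
      exact (mul_eq_zero.1 this).resolve_left hl.ne'
  have hll : (B * A) l l = 1 := by simp [hBA]
  simp [mul_apply, hBl] at hll

theorem exists_perm_mulVec_eq_of_nonneg_of_mul_eq_one (hA : ∀ i j, 0 ≤ A i j)
    (hB : ∀ i j, 0 ≤ B i j) (hAB : A * B = 1) (hBA : B * A = 1) :
    ∃ (σ : Equiv.Perm n) (c : n → R), (∀ i, 0 < c i) ∧ ∀ x i, (A *ᵥ x) i = c i * x (σ i) := by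
  choose σ hσ hσ_unique using existsUnique_pos_of_nonneg_of_mul_eq_one hA hB hAB hBA
  have hcol := existsUnique_pos_of_nonneg_of_mul_eq_one (A := Aᵀ) (B := Bᵀ)
    (fun i j => hA j i) (fun i j => hB j i)
    (by rw [← transpose_mul, hBA, transpose_one]) (by rw [← transpose_mul, hAB, transpose_one])
  have hσ_inj : Injective σ := fun i i' h => (hcol (σ i)).unique (hσ i) (h ▸ hσ i')
  refine ⟨Equiv.ofBijective σ hσ_inj.bijective_of_finite, fun i => A i (σ i), hσ, fun x i => ?_⟩
  rw [mulVec, dotProduct, Finset.sum_eq_single (σ i)]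
  · rfl
  · intro j _ hj
    rw [le_antisymm (not_lt.1 fun h => hj (hσ_unique i j h)) (hA i j), zero_mul]
  · simp

end Matrix

theorem linear_bijection_of_positive_orthant_is_scaled_permutation_general
    (m : ℕ) (h : (Fin m → ℝ) →ₗ[ℝ] (Fin m → ℝ))
    (hbij : Set.BijOn h {x : Fin m → ℝ | ∀ j, 0 < x j} {x : Fin m → ℝ | ∀ j, 0 < x j}) :
    ∃ (σ : Equiv.Perm (Fin m)) (c : Fin m → ℝ), (∀ i, 0 < c i) ∧
      ∀ (x : Fin m → ℝ) (i : Fin m), h x i = c i * x (σ i) := by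
  have hsurj : Surjective h := h.surjective_of_isOpen_subset_range isOpen_setOf_forall_pos
    ⟨1, fun _ => one_pos⟩ (hbij.image_eq ▸ image_subset_range _ _)
  let e := LinearEquiv.ofBijective h ⟨LinearMap.injective_iff_surjective.2 hsurj, hsurj⟩
  have he_symm : MapsTo e.symm {x | ∀ j, 0 < x j} {x | ∀ j, 0 < x j} := fun y hy => by
    obtain ⟨x, hx, rfl⟩ := hbij.surjOn hy
    rwa [show h x = e x from rfl, e.symm_apply_apply]
  obtain ⟨σ, c, hc, hA⟩ := Matrix.exists_perm_mulVec_eq_of_nonneg_of_mul_eq_one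
    (h.toMatrix'_nonneg_of_mapsTo hbij.mapsTo)
    (e.symm.toLinearMap.toMatrix'_nonneg_of_mapsTo he_symm)
    (by rw [← LinearMap.toMatrix'_comp, ← LinearMap.toMatrix'_id]
        exact congrArg _ (LinearMap.ext e.apply_symm_apply))
    (by rw [← LinearMap.toMatrix'_comp, ← LinearMap.toMatrix'_id]
        exact congrArg _ (LinearMap.ext e.symm_apply_apply))
  exact ⟨σ, c, hc, fun x i => by rw [← hA, LinearMap.toMatrix'_mulVec]⟩

/-- Paper: Lemma 3.1. A linear map `h : ℝ^m → ℝ^m` whose restriction to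
the open positive orthant is a bijection of the orthant onto itself consists of
positively scaling and reindexing of coordinates. -/
theorem linear_bijection_of_positive_orthant_is_scaled_permutation
    (m : ℕ) (hm : 1 ≤ m) (h : (Fin m → ℝ) →ₗ[ℝ] (Fin m → ℝ))
    (hbij : Set.BijOn h {x : Fin m → ℝ | ∀ j, 0 < x j} {x : Fin m → ℝ | ∀ j, 0 < x j}) :
    ∃ (σ : Equiv.Perm (Fin m)) (c : Fin m → ℝ), (∀ i, 0 < c i) ∧
      ∀ (x : Fin m → ℝ) (i : Fin m), h x i = c i * x (σ i) :=
  linear_bijection_of_positive_orthant_is_scaled_permutation_general m h hbij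
end

section
/- Let N be a chemical reaction network on m species with reactions (z_i, z'_i) and rate constants k_i > 0 for i = 1,…,r, with mass-action vector field f(x) = Σ_{i=1}^r k_i (z'_i − z_i) x^{z_i}, and let N' be a network on the same m species with reactions (z̃_i, z̃'_i) for i = 1,…,r̃. Suppose there exist constants b_i > 0 (i = 1,…,r̃) and c_j > 0 (j = 1,…,m) such that for every z⁰ ∈ ℕ^m, Σ_{i : z_i = z⁰} k_i (z'_i − z_i) = T · Σ_{i : z̃_i = z⁰} b_i (z̃'_i − z̃_i), where T = diag(c_1,…,c_m) and empty sums are the zero vector. Define k̃_i = b_i · ∏_{j=1}^m c_j^{z̃_{ij}} for i = 1,…,r̃ and g(y) = Σ_{i=1}^{r̃} k̃_i (z̃'_i − z̃_i) y^{z̃_i}. Then for every interval I ⊆ ℝ and every differentiable x : I → ℝ^m_{>0} satisfying x'(t) = f(x(t)) for all t ∈ I, the function y(t) = T^{-1} x(t) takes values in ℝ^m_{>0} and satisfies y'(t) = g(y(t)) for all t ∈ I; that is, N is linearly conjugate to N' via h(x) = T^{-1} x. -/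
/-!
Grouping the mass-action field by source complex gives `f(x) = Σ_{z⁰} x^{z⁰} F(z⁰)`, where `F(z⁰)`
is the rate-weighted sum of the reaction vectors with source `z⁰`; let `F̃` be the same sum for `N'`
with weights `b`. The rates `k̃_i = b_i c^{z̃_i}` are chosen so that
`g(T⁻¹x) = Σ_i b_i (z̃'_i − z̃_i) x^{z̃_i} = Σ_{z⁰} x^{z⁰} F̃(z⁰)`, so the cone condition
`F(z⁰) = T F̃(z⁰)` gives `T g(T⁻¹x) = f(x)`, which is exactly the chain rule for `y = T⁻¹x`.
-/

open Finset

namespace ReactionNetwork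

variable {σ ι ι' : Type*} [Fintype σ] [Fintype ι] [Fintype ι']

def massAction (κ : ι → ℝ) (y y' : ι → σ → ℕ) (x : σ → ℝ) : σ → ℝ :=
  ∑ i, κ i • fun j => ((y' i j : ℝ) - y i j) * ∏ l, x l ^ y i l

def sourceFlux [DecidableEq σ] (κ : ι → ℝ) (y y' : ι → σ → ℕ) (z₀ : σ → ℕ) : σ → ℝ :=
  ∑ i ∈ univ.filter (fun i => y i = z₀), κ i • fun j => (y' i j : ℝ) - y i j

theorem massAction_eq_sum_sourceFlux [DecidableEq σ] (κ : ι → ℝ) (y y' : ι → σ → ℕ)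
    (x : σ → ℝ) {S : Finset (σ → ℕ)} (hS : ∀ i, y i ∈ S) :
    massAction κ y y' x = ∑ z₀ ∈ S, (∏ l, x l ^ z₀ l) • sourceFlux κ y y' z₀ := by
  rw [massAction, ← sum_fiberwise_of_maps_to fun i _ => hS i]
  refine sum_congr rfl fun z₀ _ => ?_
  rw [sourceFlux, smul_sum]
  refine sum_congr rfl fun i hi => ?_
  rw [(mem_filter.1 hi).2]
  ext j
  simp only [Pi.smul_apply, smul_eq_mul]
  ring

theorem massAction_eq_mul_of_sourceFlux_eq [DecidableEq σ] {κ : ι → ℝ} {y y' : ι → σ → ℕ}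
    {κ' : ι' → ℝ} {yt yt' : ι' → σ → ℕ} (c : σ → ℝ)
    (h : ∀ z₀, sourceFlux κ y y' z₀ = c * sourceFlux κ' yt yt' z₀) (x : σ → ℝ) :
    massAction κ y y' x = c * massAction κ' yt yt' x := by
  have hy : ∀ i, y i ∈ univ.image y ∪ univ.image yt := fun i => by simp
  have hyt : ∀ i, yt i ∈ univ.image y ∪ univ.image yt := fun i => by simp
  rw [massAction_eq_sum_sourceFlux κ y y' x hy, massAction_eq_sum_sourceFlux κ' yt yt' x hyt,
    mul_sum]
  exact sum_congr rfl fun z₀ _ => by rw [h, mul_smul_comm]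

theorem massAction_rescale (κ : ι → ℝ) (y y' : ι → σ → ℕ) {c : σ → ℝ} (hc : ∀ j, c j ≠ 0)
    (x : σ → ℝ) :
    massAction (fun i => κ i * ∏ l, c l ^ y i l) y y' (fun l => (c l)⁻¹ * x l) =
      massAction κ y y' x := by
  refine sum_congr rfl fun i _ => ?_
  have hcancel : (∏ l, c l ^ y i l) * ∏ l, ((c l)⁻¹ * x l) ^ y i l = ∏ l, x l ^ y i l := by
    rw [← prod_mul_distrib]
    exact prod_congr rfl fun l _ => by
      rw [mul_pow, inv_pow, mul_inv_cancel_left₀ (pow_ne_zero _ (hc l))]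
  ext j
  simp only [Pi.smul_apply, smul_eq_mul, ← hcancel]
  ring

end ReactionNetwork

open ReactionNetwork in
theorem linearly_conjugate_of_cone_condition_general
    (m r rt : ℕ)
    (z z' : Fin r → Fin m → ℕ)
    (k : Fin r → ℝ)
    (zt zt' : Fin rt → Fin m → ℕ)
    (b : Fin rt → ℝ)
    (c : Fin m → ℝ) (hc : ∀ j, 0 < c j)
    (hcond : ∀ z0 : Fin m → ℕ,
      (∑ i ∈ Finset.univ.filter (fun i => z i = z0),
          k i • (fun j => (z' i j : ℝ) - (z i j : ℝ)))
        = (fun j => c j *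
            (∑ i ∈ Finset.univ.filter (fun i => zt i = z0),
              b i • (fun j' => (zt' i j' : ℝ) - (zt i j' : ℝ))) j))
    (I : Set ℝ)
    (x : ℝ → Fin m → ℝ)
    (hxpos : ∀ t ∈ I, ∀ j, 0 < x t j)
    (hx : ∀ t ∈ I, HasDerivWithinAt x
      (∑ i : Fin r, k i •
        (fun j => ((z' i j : ℝ) - (z i j : ℝ)) * ∏ l, x t l ^ z i l)) I t) :
    (∀ t ∈ I, ∀ j, 0 < (c j)⁻¹ * x t j) ∧
    (∀ t ∈ I, HasDerivWithinAt (fun s j => (c j)⁻¹ * x s j)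
      (∑ i : Fin rt, (b i * ∏ j, c j ^ zt i j) •
        (fun j => ((zt' i j : ℝ) - (zt i j : ℝ)) *
          ∏ l, ((c l)⁻¹ * x t l) ^ zt i l)) I t) := by
  have hc0 : ∀ j, c j ≠ 0 := fun j => (hc j).ne'
  refine ⟨fun t ht j => mul_pos (inv_pos.2 (hc j)) (hxpos t ht j), fun t ht => ?_⟩
  have hfield : massAction k z z' (x t) = c * massAction b zt zt' (x t) :=
    massAction_eq_mul_of_sourceFlux_eq c hcond (x t)
  have hrescaled : massAction b zt zt' (x t) = c⁻¹ * massAction k z z' (x t) := by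
    rw [hfield]
    ext j
    simp [hc0]
  change HasDerivWithinAt (fun s => c⁻¹ * x s) (massAction _ zt zt' fun l => (c l)⁻¹ * x t l) I t
  rw [massAction_rescale b zt zt' hc0, hrescaled]
  exact (hx t ht).const_mul c⁻¹

/-- Paper: Theorem 3.2, the main theorem. If for every reactant
complex `z⁰` we have `Σ_{z_i = z⁰} k_i (z'_i − z_i) = T Σ_{z̃_i = z⁰} b_i (z̃'_i − z̃_i)`
with `T = diag(c)`, then the image under `T⁻¹` of any positive solution of the
mass-action system of `N` is a positive solution of the mass-action system of `N'`
with rate constants `k̃_i = b_i ∏_j c_j^{z̃_{ij}}`; i.e. `N` is linearly conjugate to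
`N'` via `h(x) = T⁻¹x`. -/
theorem linearly_conjugate_of_cone_condition
    (m r rt : ℕ)
    (z z' : Fin r → Fin m → ℕ) (hzz : ∀ i, z i ≠ z' i)
    (k : Fin r → ℝ) (hk : ∀ i, 0 < k i)
    (zt zt' : Fin rt → Fin m → ℕ) (hzzt : ∀ i, zt i ≠ zt' i)
    (b : Fin rt → ℝ) (hb : ∀ i, 0 < b i)
    (c : Fin m → ℝ) (hc : ∀ j, 0 < c j)
    (hcond : ∀ z0 : Fin m → ℕ,
      (∑ i ∈ Finset.univ.filter (fun i => z i = z0),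
          k i • (fun j => (z' i j : ℝ) - (z i j : ℝ)))
        = (fun j => c j *
            (∑ i ∈ Finset.univ.filter (fun i => zt i = z0),
              b i • (fun j' => (zt' i j' : ℝ) - (zt i j' : ℝ))) j))
    (I : Set ℝ) (hI : I.OrdConnected)
    (x : ℝ → Fin m → ℝ)
    (hxpos : ∀ t ∈ I, ∀ j, 0 < x t j)
    (hx : ∀ t ∈ I, HasDerivWithinAt x
      (∑ i : Fin r, k i •
        (fun j => ((z' i j : ℝ) - (z i j : ℝ)) * ∏ l, x t l ^ z i l)) I t) :
    (∀ t ∈ I, ∀ j, 0 < (c j)⁻¹ * x t j) ∧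
    (∀ t ∈ I, HasDerivWithinAt (fun s j => (c j)⁻¹ * x s j)
      (∑ i : Fin rt, (b i * ∏ j, c j ^ zt i j) •
        (fun j => ((zt' i j : ℝ) - (zt i j : ℝ)) *
          ∏ l, ((c l)⁻¹ * x t l) ^ zt i l)) I t) :=
  linearly_conjugate_of_cone_condition_general m r rt z z' k zt zt' b c hc hcond I x hxpos hx
end

section
/- Let N be a network on m species with reactions (z_i, z'_i), i = 1,…,r, let N' be a network on the same species with reactions (z̃_i, z̃'_i), i = 1,…,r̃, and fix c_1,…,c_m > 0 with T = diag(c_1,…,c_m). Then the following are equivalent: (a) there exist rate constant vectors k ∈ ℝ^r_{>0} and k̃ ∈ ℝ^{r̃}_{>0} such that T^{-1} f_k(T y) = g_{k̃}(y) for all y ∈ ℝ^m_{>0}, where f_k(x) = Σ_{i=1}^r k_i (z'_i − z_i) x^{z_i} and g_{k̃}(y) = Σ_{i=1}^{r̃} k̃_i (z̃'_i − z̃_i) y^{z̃_i} (i.e., the two mass-action systems are linearly conjugate via h(x) = T^{-1}x); (b) for every z⁰ ∈ ℕ^m that is a reactant complex of N or of N', the sets C_R(z⁰) and T · C_{R'}(z⁰)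 have a common element, where C_R and C_{R'} are the reaction cones of N and N' respectively and T · S = {T v : v ∈ S}. -/
/-!
Substituting `x = T y` turns `f_k (T y)` into `∑ i, k i c^{z i} (z' i - z i) y^{z i}`. Distinct
monomials are linearly independent as functions on the positive orthant (a polynomial vanishing on
a product of infinite sets is zero), so `T⁻¹ f_k (T y) = g_k̃ y` holds iff for every complex `z0`
the coefficient vectors agree:
`∑_{z i = z0} k i c^{z i} (z' i - z i) = T ∑_{z̃ i = z0} k̃ i (z̃' i - z̃ i)`.
The left side is a point of `C_R(z0)` and the right one of `T · C_R'(z0)`; since every reaction has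
exactly one reactant complex, witnesses chosen complex by complex assemble into rate vectors.
-/

open scoped BigOperators

/-- The reaction cone of a network at the complex `z0`: all positive combinations of the
reaction vectors of reactions whose reactant complex is `z0` (equal to `{0}` if there are
no such reactions). -/
def reactionCone (m r : ℕ) (z z' : Fin r → Fin m → ℕ) (z0 : Fin m → ℕ) :
    Set (Fin m → ℝ) :=
  {v | ∃ α : Fin r → ℝ, (∀ i, z i = z0 → 0 < α i) ∧
    v = ∑ i ∈ Finset.univ.filter (fun i => z i = z0),
        α i • (fun j => (z' i j : ℝ) - (z i j : ℝ))}

open Finset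

section Monomials

variable {σ ι κ R : Type*} [Fintype σ] [Fintype ι] [Fintype κ] [CommSemiring R]

noncomputable def sumMonomials (e : ι → σ → ℕ) (a : ι → R) : MvPolynomial σ R :=
  ∑ i, MvPolynomial.monomial (Finsupp.equivFunOnFinite.symm (e i)) (a i)

theorem eval_sumMonomials (e : ι → σ → ℕ) (a : ι → R) (y : σ → R) :
    MvPolynomial.eval y (sumMonomials e a) = ∑ i, a i * ∏ l, y l ^ e i l := by
  simp only [sumMonomials, map_sum, MvPolynomial.eval_monomial]
  refine sum_congr rfl fun i _ => ?_
  rw [Finsupp.prod_fintype _ _ fun _ => pow_zero _]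
  rfl

theorem coeff_sumMonomials (e : ι → σ → ℕ) (a : ι → R) (z0 : σ → ℕ) :
    (sumMonomials e a).coeff (Finsupp.equivFunOnFinite.symm z0) =
      ∑ i ∈ univ.filter (e · = z0), a i := by
  classical
  simp only [sumMonomials, MvPolynomial.coeff_sum, MvPolynomial.coeff_monomial,
    EmbeddingLike.apply_eq_iff_eq, sum_filter]

theorem forall_pos_sum_mul_prod_pow_eq_iff {e : ι → σ → ℕ} {f : κ → σ → ℕ}
    {a : ι → ℝ} {b : κ → ℝ} :
    (∀ y : σ → ℝ, (∀ l, 0 < y l) →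
        ∑ i, a i * ∏ l, y l ^ e i l = ∑ i, b i * ∏ l, y l ^ f i l) ↔
      ∀ z0 : σ → ℕ, ∑ i ∈ univ.filter (e · = z0), a i = ∑ i ∈ univ.filter (f · = z0), b i := by
  calc _ ↔ sumMonomials e a = sumMonomials f b := by
        rw [MvPolynomial.funext_set_iff (fun _ => Set.Ioi 0) fun _ => Set.Ioi_infinite 0]
        simp only [Set.mem_pi, Set.mem_univ, Set.mem_Ioi, forall_const, eval_sumMonomials]
    _ ↔ _ := by
        rw [MvPolynomial.ext_iff, ← Finsupp.equivFunOnFinite.symm.forall_congr_right]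
        simp only [coeff_sumMonomials]

end Monomials

section MassAction

variable {σ ι κ : Type*} [Fintype σ] [Fintype ι] [Fintype κ]

def massAction (z z' : ι → σ → ℕ) (k : ι → ℝ) (x : σ → ℝ) : σ → ℝ :=
  ∑ i, k i • fun j => ((z' i j : ℝ) - z i j) * ∏ l, x l ^ z i l

def reactionSum (z z' : ι → σ → ℕ) (z0 : σ → ℕ) (α : ι → ℝ) : σ → ℝ :=
  ∑ i ∈ univ.filter (fun i => z i = z0), α i • fun j => (z' i j : ℝ) - z i j

theorem massAction_apply (z z' : ι → σ → ℕ) (k : ι → ℝ) (x : σ → ℝ) (j : σ) :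
    massAction z z' k x j = ∑ i, k i * ((z' i j : ℝ) - z i j) * ∏ l, x l ^ z i l := by
  simp only [massAction, Finset.sum_apply, Pi.smul_apply, smul_eq_mul, mul_assoc]

theorem reactionSum_apply (z z' : ι → σ → ℕ) (z0 : σ → ℕ) (α : ι → ℝ) (j : σ) :
    reactionSum z z' z0 α j =
      ∑ i ∈ univ.filter (fun i => z i = z0), α i * ((z' i j : ℝ) - z i j) := by
  simp only [reactionSum, Finset.sum_apply, Pi.smul_apply, smul_eq_mul]

theorem massAction_mul (z z' : ι → σ → ℕ) (k : ι → ℝ) (c x : σ → ℝ) :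
    massAction z z' k (fun l => c l * x l) =
      massAction z z' (fun i => k i * ∏ l, c l ^ z i l) x := by
  ext j
  simp only [massAction_apply, mul_pow, prod_mul_distrib]
  exact sum_congr rfl fun i _ => by ring

theorem forall_pos_massAction_eq_mul_iff (d : σ → ℝ) {z z' : ι → σ → ℕ} {zt zt' : κ → σ → ℕ}
    {k : ι → ℝ} {kt : κ → ℝ} :
    (∀ y : σ → ℝ, (∀ l, 0 < y l) → ∀ j, massAction z z' k y j = d j * massAction zt zt' kt y j) ↔
      ∀ z0, reactionSum z z' z0 k = d * reactionSum zt zt' z0 kt := by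
  simp only [imp_forall_iff, massAction_apply, mul_sum, ← mul_assoc]
  rw [forall_comm]
  simp only [forall_pos_sum_mul_prod_pow_eq_iff]
  rw [forall_comm]
  refine forall_congr' fun z0 => ?_
  rw [funext_iff]
  simp only [Pi.mul_apply, reactionSum_apply, mul_sum, mul_assoc]

theorem reactionSum_congr {z z' : ι → σ → ℕ} {z0 : σ → ℕ} {α α' : ι → ℝ}
    (h : ∀ i, z i = z0 → α i = α' i) : reactionSum z z' z0 α = reactionSum z z' z0 α' :=
  sum_congr rfl fun i hi => by rw [h i (mem_filter.1 hi).2]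

theorem exists_pos_forall_reactionSum_eq_iff {z z' : ι → σ → ℕ} {zt zt' : κ → σ → ℕ}
    {w : ι → ℝ} (hw : ∀ i, 0 < w i) (d : σ → ℝ) :
    (∃ (k : ι → ℝ) (kt : κ → ℝ), (∀ i, 0 < k i) ∧ (∀ i, 0 < kt i) ∧
        ∀ z0, reactionSum z z' z0 (fun i => k i * w i) = d * reactionSum zt zt' z0 kt) ↔
      ∀ z0, ∃ α β, (∀ i, z i = z0 → 0 < α i) ∧ (∀ i, zt i = z0 → 0 < β i) ∧
        reactionSum z z' z0 α = d * reactionSum zt zt' z0 β := by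
  constructor
  · rintro ⟨k, kt, hk, hkt, h⟩ z0
    exact ⟨_, kt, fun i _ => mul_pos (hk i) (hw i), fun i _ => hkt i, h z0⟩
  · intro h
    choose α β hα hβ hαβ using h
    refine ⟨fun i => α (z i) i / w i, fun i => β (zt i) i, fun i => div_pos (hα _ i rfl) (hw i),
      fun i => hβ _ i rfl, fun z0 => ?_⟩
    rw [reactionSum_congr (α' := α z0), reactionSum_congr (α' := β z0)]
    · exact hαβ z0
    · rintro i rfl; rfl
    · rintro i rfl; exact div_mul_cancel₀ _ (hw i).ne'

end MassAction

section ReactionCone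

variable {m r rt : ℕ}

theorem reactionCone_inter_image_nonempty_iff {z z' : Fin r → Fin m → ℕ}
    {zt zt' : Fin rt → Fin m → ℕ} {c : Fin m → ℝ} {z0 : Fin m → ℕ} :
    (reactionCone m r z z' z0 ∩
        ((fun v : Fin m → ℝ => fun j => c j * v j) '' reactionCone m rt zt zt' z0)).Nonempty ↔
      ∃ α β, (∀ i, z i = z0 → 0 < α i) ∧ (∀ i, zt i = z0 → 0 < β i) ∧
        reactionSum z z' z0 α = c * reactionSum zt zt' z0 β := by
  constructor
  · rintro ⟨_, ⟨α, hα, rfl⟩, _, ⟨β, hβ, rfl⟩, h⟩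
    exact ⟨α, β, hα, hβ, h.symm⟩
  · rintro ⟨α, β, hα, hβ, h⟩
    exact ⟨_, ⟨α, hα, rfl⟩, _, ⟨β, hβ, rfl⟩, h.symm⟩

theorem zero_mem_reactionCone {z z' : Fin r → Fin m → ℕ} {z0 : Fin m → ℕ}
    (h : ∀ i, z i ≠ z0) : 0 ∈ reactionCone m r z z' z0 :=
  ⟨0, fun i hi => absurd hi (h i),
    (sum_eq_zero fun i hi => absurd (mem_filter.1 hi).2 (h i)).symm⟩

theorem reactionCone_inter_image_nonempty_of_forall_ne {z z' : Fin r → Fin m → ℕ}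
    {zt zt' : Fin rt → Fin m → ℕ} {c : Fin m → ℝ} {z0 : Fin m → ℕ}
    (hz : ∀ i, z i ≠ z0) (hzt : ∀ i, zt i ≠ z0) :
    (reactionCone m r z z' z0 ∩
        ((fun v : Fin m → ℝ => fun j => c j * v j) '' reactionCone m rt zt zt' z0)).Nonempty :=
  ⟨0, zero_mem_reactionCone hz, 0, zero_mem_reactionCone hzt, funext fun _ => mul_zero _⟩

end ReactionCone

theorem exists_rates_linearly_conjugate_iff_cones_intersect_general
    (m r rt : ℕ)
    (z z' : Fin r → Fin m → ℕ)
    (zt zt' : Fin rt → Fin m → ℕ)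
    (c : Fin m → ℝ) (hc : ∀ j, 0 < c j) :
    (∃ (k : Fin r → ℝ) (kt : Fin rt → ℝ), (∀ i, 0 < k i) ∧ (∀ i, 0 < kt i) ∧
      ∀ y : Fin m → ℝ, (∀ j, 0 < y j) → ∀ j : Fin m,
        (c j)⁻¹ * (∑ i : Fin r, k i •
            (fun j' => ((z' i j' : ℝ) - (z i j' : ℝ)) *
              ∏ l, (c l * y l) ^ z i l)) j
          = (∑ i : Fin rt, kt i •
              (fun j' => ((zt' i j' : ℝ) - (zt i j' : ℝ)) *
                ∏ l, y l ^ zt i l)) j)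
    ↔
    (∀ z0 : Fin m → ℕ, ((∃ i, z i = z0) ∨ (∃ i, zt i = z0)) →
      (reactionCone m r z z' z0 ∩
        ((fun v : Fin m → ℝ => fun j => c j * v j) ''
          reactionCone m rt zt zt' z0)).Nonempty) := by
  have hcz : ∀ i, 0 < ∏ l, c l ^ z i l := fun i => prod_pos fun l _ => pow_pos (hc l) _
  calc _ ↔ ∃ (k : Fin r → ℝ) (kt : Fin rt → ℝ), (∀ i, 0 < k i) ∧ (∀ i, 0 < kt i) ∧ ∀ z0,
          reactionSum z z' z0 (fun i => k i * ∏ l, c l ^ z i l) = c * reactionSum zt zt' z0 kt := by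
        refine exists₂_congr fun k kt => and_congr_right' <| and_congr_right' ?_
        rw [← forall_pos_massAction_eq_mul_iff]
        refine forall₂_congr fun y _ => forall_congr' fun j => ?_
        rw [← massAction_mul, inv_mul_eq_iff_eq_mul₀ (hc j).ne']
        rfl
    _ ↔ ∀ z0, ∃ α β, (∀ i, z i = z0 → 0 < α i) ∧ (∀ i, zt i = z0 → 0 < β i) ∧
          reactionSum z z' z0 α = c * reactionSum zt zt' z0 β :=
        exists_pos_forall_reactionSum_eq_iff hcz c
    _ ↔ _ := by
        simp only [← reactionCone_inter_image_nonempty_iff]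
        refine forall_congr' fun z0 => ⟨fun h _ => h, fun h => ?_⟩
        by_cases hz0 : (∃ i, z i = z0) ∨ (∃ i, zt i = z0)
        · exact h hz0
        · rw [not_or, not_exists, not_exists] at hz0
          exact reactionCone_inter_image_nonempty_of_forall_ne hz0.1 hz0.2

/-- Paper: Corollary 3.1. With `T = diag(c)` fixed, there exist rate
constants making the two networks linearly conjugate via `h(x) = T⁻¹x` if and only if for
every reactant complex `z⁰` of either network, `C_R(z⁰)` and `T · C_{R'}(z⁰)` intersect. -/
theorem exists_rates_linearly_conjugate_iff_cones_intersect
    (m r rt : ℕ)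
    (z z' : Fin r → Fin m → ℕ) (hzz : ∀ i, z i ≠ z' i)
    (zt zt' : Fin rt → Fin m → ℕ) (hzzt : ∀ i, zt i ≠ zt' i)
    (c : Fin m → ℝ) (hc : ∀ j, 0 < c j) :
    (∃ (k : Fin r → ℝ) (kt : Fin rt → ℝ), (∀ i, 0 < k i) ∧ (∀ i, 0 < kt i) ∧
      ∀ y : Fin m → ℝ, (∀ j, 0 < y j) → ∀ j : Fin m,
        (c j)⁻¹ * (∑ i : Fin r, k i •
            (fun j' => ((z' i j' : ℝ) - (z i j' : ℝ)) *
              ∏ l, (c l * y l) ^ z i l)) j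
          = (∑ i : Fin rt, kt i •
              (fun j' => ((zt' i j' : ℝ) - (zt i j' : ℝ)) *
                ∏ l, y l ^ zt i l)) j)
    ↔
    (∀ z0 : Fin m → ℕ, ((∃ i, z i = z0) ∨ (∃ i, zt i = z0)) →
      (reactionCone m r z z' z0 ∩
        ((fun v : Fin m → ℝ => fun j => c j * v j) ''
          reactionCone m rt zt zt' z0)).Nonempty) :=
  exists_rates_linearly_conjugate_iff_cones_intersect_general m r rt z z' zt zt' c hc
end

section
/- Let N be a network on m species with reactions (z_i, z'_i), i = 1,…,r, let N' be a network on the same species with reactions (z̃_i, z̃'_i), i = 1,…,r̃, and fix c_1,…,c_m > 0 with T = diag(c_1,…,c_m). Then the following are equivalent: (a) for every rate constant vector k ∈ ℝ^r_{>0} there exists a rate constant vector k̃ ∈ ℝ^{r̃}_{>0} such that T^{-1} f_k(T y) = g_{k̃}(y) for all y ∈ ℝ^m_{>0}, where f_k(x) = Σ_{i=1}^r k_i (z'_i − z_i) x^{z_i} and g_{k̃}(y) = Σ_{i=1}^{r̃} k̃_i (z̃'_i − z̃_i) y^{z̃_i} (i.e., N with rates k is linearly conjugate to N' via h(x) = T^{-1}x);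 (b) for every z⁰ ∈ ℕ^m that is a reactant complex of N or of N', one has C_R(z⁰) ⊆ T · C_{R'}(z⁰), where C_R and C_{R'} are the reaction cones of N and N' respectively and T · S = {T v : v ∈ S}. -/
/-!
Grouping the reactions of `N` by reactant complex writes
`f_k(x) = ∑_{z⁰} x^{z⁰} v_k(z⁰)` with `v_k(z⁰) = ∑_{z_i = z⁰} k_i (z'_i - z_i)`, so that
`T⁻¹ f_k(T y) = ∑_{z⁰} y^{z⁰} c^{z⁰} T⁻¹ v_k(z⁰)`. Distinct monomials are linearly independent
as functions on the positive orthant, hence conjugacy amounts to `c^{z⁰} v_k(z⁰) = T ṽ_{k̃}(z⁰)`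
for every complex `z⁰`. As `k` ranges over positive rates, `c^{z⁰} v_k(z⁰)` ranges over the whole
cone `C_R(z⁰)`, independently for different `z⁰`, and `ṽ_{k̃}(z⁰)` over `C_{R'}(z⁰)`.
-/

open scoped BigOperators

open Finset MvPolynomial

theorem eq_zero_of_sum_mul_prod_pow_eq_zero {σ R : Type*} [Fintype σ] [CommRing R]
    [LinearOrder R] [IsStrictOrderedRing R] (s : Finset (σ → ℕ)) (a : (σ → ℕ) → R)
    (h : ∀ y : σ → R, (∀ l, 0 < y l) → ∑ e ∈ s, a e * ∏ l, y l ^ e l = 0) :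
    ∀ e ∈ s, a e = 0 := by
  classical
  let p : MvPolynomial σ R := ∑ e ∈ s, monomial (Finsupp.equivFunOnFinite.symm e) (a e)
  have hp : p = 0 := by
    refine funext_set (fun _ => Set.Ioi 0) (fun _ => Set.Ioi_infinite 0) fun y hy => ?_
    simpa [p, eval_monomial, Finsupp.prod_fintype] using h y fun l => hy l trivial
  intro e he
  simpa [p, coeff_sum, coeff_monomial, he] using
    congrArg (coeff (Finsupp.equivFunOnFinite.symm e)) hp

section MassAction

variable {m r : ℕ} (z z' : Fin r → Fin m → ℕ)

def massActionField (k : Fin r → ℝ) (x : Fin m → ℝ) : Fin m → ℝ :=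
  ∑ i, k i • fun j => ((z' i j : ℝ) - (z i j : ℝ)) * ∏ l, x l ^ z i l

/-- The coefficient of `x ^ z0` in `massActionField z z' k x`. -/
def massActionCoeff (k : Fin r → ℝ) (z0 : Fin m → ℕ) : Fin m → ℝ :=
  ∑ i ∈ univ.filter (fun i => z i = z0), k i • fun j => (z' i j : ℝ) - (z i j : ℝ)

variable {z z'}

theorem massActionCoeff_congr {k k' : Fin r → ℝ} {z0 : Fin m → ℕ}
    (h : ∀ i, z i = z0 → k i = k' i) :
    massActionCoeff z z' k z0 = massActionCoeff z z' k' z0 :=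
  sum_congr rfl fun i hi => by rw [h i (mem_filter.mp hi).2]

theorem massActionCoeff_smul (a : ℝ) (k : Fin r → ℝ) (z0 : Fin m → ℕ) :
    massActionCoeff z z' (a • k) z0 = a • massActionCoeff z z' k z0 := by
  simp only [massActionCoeff, smul_sum, Pi.smul_apply, smul_eq_mul, smul_smul]

theorem massActionCoeff_eq_zero_of_forall_ne {z0 : Fin m → ℕ} (h : ∀ i, z i ≠ z0)
    (k : Fin r → ℝ) : massActionCoeff z z' k z0 = 0 := by
  simp [massActionCoeff, filter_false_of_mem fun i _ => h i]

theorem reactionCone_eq_singleton_zero_of_forall_ne {z0 : Fin m → ℕ} (h : ∀ i, z i ≠ z0) :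
    reactionCone m r z z' z0 = {0} := by
  ext v
  constructor
  · rintro ⟨α, -, rfl⟩
    exact massActionCoeff_eq_zero_of_forall_ne h α
  · rintro rfl
    exact ⟨1, fun _ _ => one_pos, (massActionCoeff_eq_zero_of_forall_ne h 1).symm⟩

theorem massActionField_eq_sum_monomial {S : Finset (Fin m → ℕ)} (hS : ∀ i, z i ∈ S)
    (k : Fin r → ℝ) (x : Fin m → ℝ) :
    massActionField z z' k x = ∑ z0 ∈ S, (∏ l, x l ^ z0 l) • massActionCoeff z z' k z0 := by
  rw [massActionField, ← sum_fiberwise_of_maps_to fun i _ => hS i]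
  refine sum_congr rfl fun z0 _ => ?_
  rw [massActionCoeff, smul_sum]
  refine sum_congr rfl fun i hi => ?_
  rw [(mem_filter.mp hi).2]
  ext j
  simp only [Pi.smul_apply, smul_eq_mul]
  ring

variable (z z') {rt : ℕ} (zt zt' : Fin rt → Fin m → ℕ)

/-- `h(x) = T⁻¹ x` with `T = diag c` conjugates `f_k` to `g_kt` on the positive orthant. -/
def LinearlyConjugate (c : Fin m → ℝ) (k : Fin r → ℝ) (kt : Fin rt → ℝ) : Prop :=
  ∀ y : Fin m → ℝ, (∀ j, 0 < y j) → ∀ j,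
    (c j)⁻¹ * massActionField z z' k (c * y) j = massActionField zt zt' kt y j

variable {z z' zt zt'}

theorem linearlyConjugate_iff {c : Fin m → ℝ} (hc : ∀ j, c j ≠ 0) (k : Fin r → ℝ)
    (kt : Fin rt → ℝ) :
    LinearlyConjugate z z' zt zt' c k kt ↔ ∀ z0,
      (∏ l, c l ^ z0 l) • massActionCoeff z z' k z0 = c * massActionCoeff zt zt' kt z0 := by
  classical
  set S := univ.image z ∪ univ.image zt
  have hz : ∀ i, z i ∈ S := fun i => mem_union_left _ (mem_image_of_mem z (mem_univ i))
  have hzt : ∀ i, zt i ∈ S := fun i => mem_union_right _ (mem_image_of_mem zt (mem_univ i))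
  have hdiff : ∀ y j, (c j)⁻¹ * massActionField z z' k (c * y) j - massActionField zt zt' kt y j
      = ∑ z0 ∈ S, ((c j)⁻¹ * (∏ l, c l ^ z0 l) * massActionCoeff z z' k z0 j
          - massActionCoeff zt zt' kt z0 j) * ∏ l, y l ^ z0 l := by
    intro y j
    simp only [massActionField_eq_sum_monomial hz, massActionField_eq_sum_monomial hzt,
      Finset.sum_apply, Pi.smul_apply, smul_eq_mul, mul_sum, ← sum_sub_distrib, Pi.mul_apply,
      mul_pow, prod_mul_distrib]
    exact sum_congr rfl fun _ _ => by ring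
  constructor
  · intro H z0
    by_cases hz0 : z0 ∈ S
    · ext j
      have := eq_zero_of_sum_mul_prod_pow_eq_zero S _
        (fun y hy => by rw [← hdiff, H y hy j, sub_self]) z0 hz0
      rw [sub_eq_zero, mul_assoc, inv_mul_eq_iff_eq_mul₀ (hc j)] at this
      simpa using this
    · rw [massActionCoeff_eq_zero_of_forall_ne fun i (h : z i = z0) => hz0 (h ▸ hz i),
        massActionCoeff_eq_zero_of_forall_ne fun i (h : zt i = z0) => hz0 (h ▸ hzt i)]
      simp
  · intro H y _ j
    rw [← sub_eq_zero, hdiff]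
    refine sum_eq_zero fun z0 _ => ?_
    rw [mul_assoc, ← smul_eq_mul (∏ l, c l ^ z0 l), ← Pi.smul_apply, H z0, Pi.mul_apply,
      inv_mul_cancel_left₀ (hc j), sub_self, zero_mul]

end MassAction

theorem forall_rates_linearly_conjugate_iff_cone_subset_general
    (m r rt : ℕ)
    (z z' : Fin r → Fin m → ℕ)
    (zt zt' : Fin rt → Fin m → ℕ)
    (c : Fin m → ℝ) (hc : ∀ j, 0 < c j) :
    (∀ k : Fin r → ℝ, (∀ i, 0 < k i) →
      ∃ kt : Fin rt → ℝ, (∀ i, 0 < kt i) ∧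
        ∀ y : Fin m → ℝ, (∀ j, 0 < y j) → ∀ j : Fin m,
          (c j)⁻¹ * (∑ i : Fin r, k i •
              (fun j' => ((z' i j' : ℝ) - (z i j' : ℝ)) *
                ∏ l, (c l * y l) ^ z i l)) j
            = (∑ i : Fin rt, kt i •
                (fun j' => ((zt' i j' : ℝ) - (zt i j' : ℝ)) *
                  ∏ l, y l ^ zt i l)) j)
    ↔
    (∀ z0 : Fin m → ℕ, ((∃ i, z i = z0) ∨ (∃ i, zt i = z0)) →
      reactionCone m r z z' z0 ⊆
        ((fun v : Fin m → ℝ => fun j => c j * v j) ''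
          reactionCone m rt zt zt' z0)) := by
  change (∀ k : Fin r → ℝ, (∀ i, 0 < k i) → ∃ kt : Fin rt → ℝ, (∀ i, 0 < kt i) ∧
    LinearlyConjugate z z' zt zt' c k kt) ↔ _
  have hP (z0 : Fin m → ℕ) : 0 < ∏ l, c l ^ z0 l := prod_pos fun l _ => pow_pos (hc l) _
  simp_rw [linearlyConjugate_iff fun j => (hc j).ne']
  constructor
  · rintro H z0 - v ⟨α, hα, rfl⟩
    let k i := if z i = z0 then (∏ l, c l ^ z0 l)⁻¹ * α i else 1
    obtain ⟨kt, hkt, hcoeff⟩ := H k fun i => by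
      by_cases h : z i = z0 <;> simp [k, h, hα, hP]
    refine ⟨_, ⟨kt, fun i _ => hkt i, rfl⟩, ?_⟩
    change c * massActionCoeff zt zt' kt z0 = massActionCoeff z z' α z0
    rw [← hcoeff z0, massActionCoeff_congr (k' := (∏ l, c l ^ z0 l)⁻¹ • α)
      fun i h => by simp [k, h], massActionCoeff_smul, smul_smul, mul_inv_cancel₀ (hP z0).ne',
      one_smul]
  · intro H k hk
    have hsubset z0 : reactionCone m r z z' z0 ⊆ (c * ·) '' reactionCone m rt zt zt' z0 := by
      by_cases h : (∃ i, z i = z0) ∨ ∃ i, zt i = z0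
      · exact H z0 h
      · push Not at h
        simp [reactionCone_eq_singleton_zero_of_forall_ne h.1,
          reactionCone_eq_singleton_zero_of_forall_ne h.2]
    have hβ z0 : ∃ β : Fin rt → ℝ, (∀ i, zt i = z0 → 0 < β i) ∧
        (∏ l, c l ^ z0 l) • massActionCoeff z z' k z0 = c * massActionCoeff zt zt' β z0 := by
      obtain ⟨_, ⟨β, hβ, rfl⟩, hcβ⟩ := hsubset z0
        ⟨_, fun i _ => mul_pos (hP z0) (hk i), (massActionCoeff_smul _ k z0).symm⟩
      exact ⟨β, hβ, hcβ.symm⟩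
    choose β hβpos hβ using hβ
    refine ⟨fun i => β (zt i) i, fun i => hβpos _ i rfl, fun z0 => ?_⟩
    rw [hβ, massActionCoeff_congr (k' := fun i => β (zt i) i) fun i h => by rw [h]]

/-- Paper: Corollary 3.2. With `T = diag(c)` fixed, for every rate
constant vector `k` of `N` there exists a rate constant vector `k̃` of `N'` making the two
mass-action systems linearly conjugate via `h(x) = T⁻¹x` if and only if for every reactant
complex `z⁰` of either network, `C_R(z⁰) ⊆ T · C_{R'}(z⁰)`. -/
theorem forall_rates_linearly_conjugate_iff_cone_subset
    (m r rt : ℕ)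
    (z z' : Fin r → Fin m → ℕ) (hzz : ∀ i, z i ≠ z' i)
    (zt zt' : Fin rt → Fin m → ℕ) (hzzt : ∀ i, zt i ≠ zt' i)
    (c : Fin m → ℝ) (hc : ∀ j, 0 < c j) :
    (∀ k : Fin r → ℝ, (∀ i, 0 < k i) →
      ∃ kt : Fin rt → ℝ, (∀ i, 0 < kt i) ∧
        ∀ y : Fin m → ℝ, (∀ j, 0 < y j) → ∀ j : Fin m,
          (c j)⁻¹ * (∑ i : Fin r, k i •
              (fun j' => ((z' i j' : ℝ) - (z i j' : ℝ)) *
                ∏ l, (c l * y l) ^ z i l)) j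
            = (∑ i : Fin rt, kt i •
                (fun j' => ((zt' i j' : ℝ) - (zt i j' : ℝ)) *
                  ∏ l, y l ^ zt i l)) j)
    ↔
    (∀ z0 : Fin m → ℕ, ((∃ i, z i = z0) ∨ (∃ i, zt i = z0)) →
      reactionCone m r z z' z0 ⊆
        ((fun v : Fin m → ℝ => fun j => c j * v j) ''
          reactionCone m rt zt zt' z0)) :=
  forall_rates_linearly_conjugate_iff_cone_subset_general m r rt z z' zt zt' c hc
end

section
/- Let N be a chemical reaction network on m species with reactions (z_i, z'_i) and rate constants k_i > 0, i = 1,…,r, and mass-action vector field f(x) = Σ_{i=1}^r k_i (z'_i − z_i) x^{z_i}. If N is weakly reversible, then the kinetic subspace equals the stoichiometric subspace: span{ f(x) : x ∈ ℝ^m_{>0} } = span{ z'_i − z_i : i = 1,…,r }. -/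
/-!
The kinetic subspace lies in the stoichiometric one since every `f x` is a combination of the
reaction vectors. Conversely, let `φ` be a linear form vanishing on all `f x`, and put
`g u = φ u` on complexes. Then `∑ i, k i (g (z' i) - g (z i)) x ^ (z i) = 0` on the positive
orthant, and since distinct monomials are linearly independent there, the sum of the terms with
a given source complex `u` vanishes. At a complex where `g` is maximal on everything reachable
from it these terms are all `≤ 0`, hence `0`: a maximum principle making `g` constant on the
forward-reachable set of such a complex. Weak reversibility puts both ends of every reaction in
such a set, so `φ` kills every reaction vector.
-/

open Finset Relation

theorem sum_filter_eq_zero_of_forall_pos_sum_mul_prod_pow_eq_zero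
    {R ι σ : Type*} [CommRing R] [LinearOrder R] [IsStrictOrderedRing R] [Fintype ι] [Fintype σ]
    [DecidableEq σ] (e : ι → σ → ℕ) (c : ι → R)
    (h : ∀ x : σ → R, (∀ j, 0 < x j) → ∑ i, c i * ∏ l, x l ^ e i l = 0) (u : σ → ℕ) :
    ∑ i with e i = u, c i = 0 := by
  let p : MvPolynomial σ R :=
    ∑ i, MvPolynomial.monomial (Finsupp.equivFunOnFinite.symm (e i)) (c i)
  have hp : p = 0 := by
    refine MvPolynomial.funext_set (fun _ => Set.Ioi 0) (fun _ => Set.Ioi_infinite 0)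
      fun x hx => ?_
    simpa [p, MvPolynomial.eval_monomial, Finsupp.prod_fintype] using h x fun j => hx j trivial
  have := congrArg (MvPolynomial.coeff (Finsupp.equivFunOnFinite.symm u)) hp
  simpa [p, MvPolynomial.coeff_sum, MvPolynomial.coeff_monomial, sum_filter] using this

theorem span_le_span_of_forall_dual {K V : Type*} [Field K] [AddCommGroup V] [Module K V]
    {s t : Set V} (h : ∀ φ : Module.Dual K V, (∀ x ∈ s, φ x = 0) → ∀ y ∈ t, φ y = 0) :
    Submodule.span K t ≤ Submodule.span K s := by
  rw [← Subspace.dualAnnihilator_le_dualAnnihilator_iff]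
  intro φ hφ
  rw [← SetLike.mem_coe, Submodule.coe_dualAnnihilator_span] at hφ ⊢
  exact h φ hφ

def reactionGraph {ι C : Type*} (z z' : ι → C) (u v : C) : Prop := ∃ i, z i = u ∧ z' i = v

section ReactionGraph

variable {ι C R : Type*} {z z' : ι → C}

theorem finite_setOf_reflTransGen_reactionGraph [Finite ι] (a : C) :
    {w | ReflTransGen (reactionGraph z z') a w}.Finite := by
  refine ((Set.finite_range z').insert a).subset fun w hw => ?_
  rcases ReflTransGen.cases_tail hw with rfl | ⟨_, _, i, -, rfl⟩
  · exact Set.mem_insert _ _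
  · exact Set.mem_insert_of_mem _ ⟨i, rfl⟩

theorem exists_reflTransGen_reactionGraph_isMax [Finite ι] [LinearOrder R] (g : C → R) (a : C) :
    ∃ u, ReflTransGen (reactionGraph z z') a u ∧
      ∀ w, ReflTransGen (reactionGraph z z') u w → g w ≤ g u := by
  obtain ⟨u, hau, hmax⟩ := Set.exists_max_image _ g
    (finite_setOf_reflTransGen_reactionGraph (z := z) (z' := z') a) ⟨a, ReflTransGen.refl⟩
  exact ⟨u, hau, fun w huw => hmax w (hau.trans huw)⟩

variable [Fintype ι] [DecidableEq C] [Ring R] [LinearOrder R] [IsStrictOrderedRing R]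
  {k : ι → R} {g : C → R}

theorem apply_target_eq_of_sum_eq_zero (hk : ∀ i, 0 < k i) {u : C}
    (hbal : ∑ i with z i = u, k i * (g (z' i) - g (z i)) = 0)
    (hle : ∀ i, z i = u → g (z' i) ≤ g u) {i : ι} (hi : z i = u) : g (z' i) = g u := by
  have hnonpos : ∀ j ∈ univ.filter (z · = u), k j * (g (z' j) - g (z j)) ≤ 0 := by
    intro j hj
    rw [mem_filter] at hj
    rw [hj.2]
    exact mul_nonpos_of_nonneg_of_nonpos (hk j).le (sub_nonpos.2 (hle j hj.2))
  have hi0 := (sum_eq_zero_iff_of_nonpos hnonpos).1 hbal i (by simp [hi])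
  rw [hi] at hi0
  exact sub_eq_zero.1 ((mul_eq_zero.1 hi0).resolve_left (hk i).ne')

theorem apply_eq_of_reflTransGen_reactionGraph (hk : ∀ i, 0 < k i)
    (hbal : ∀ u, ∑ i with z i = u, k i * (g (z' i) - g (z i)) = 0) {u : C}
    (hmax : ∀ w, ReflTransGen (reactionGraph z z') u w → g w ≤ g u) {w : C}
    (huw : ReflTransGen (reactionGraph z z') u w) : g w = g u := by
  induction huw with
  | refl => rfl
  | @tail v _ huv hvw ih =>
    obtain ⟨i, rfl, rfl⟩ := hvw
    rw [← ih]
    refine apply_target_eq_of_sum_eq_zero hk (hbal _) (fun j hj => ?_) rfl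
    exact ih ▸ hmax _ (huv.tail ⟨j, hj, rfl⟩)

theorem apply_target_eq_apply_source_of_weaklyReversible (hk : ∀ i, 0 < k i)
    (hwr : ∀ a b, ReflTransGen (reactionGraph z z') a b → ReflTransGen (reactionGraph z z') b a)
    (hbal : ∀ u, ∑ i with z i = u, k i * (g (z' i) - g (z i)) = 0) (i : ι) :
    g (z' i) = g (z i) := by
  obtain ⟨u, hu, hmax⟩ := exists_reflTransGen_reactionGraph_isMax (z := z) (z' := z') g (z i)
  have hui := hwr _ _ hu
  rw [apply_eq_of_reflTransGen_reactionGraph hk hbal hmax (hui.tail ⟨i, rfl, rfl⟩),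
    apply_eq_of_reflTransGen_reactionGraph hk hbal hmax hui]

end ReactionGraph

theorem kinetic_subspace_eq_stoichiometric_subspace_of_weakly_reversible_general
    (m r : ℕ)
    (z z' : Fin r → Fin m → ℕ)
    (k : Fin r → ℝ) (hk : ∀ i, 0 < k i)
    (hwr : ∀ a b : Fin m → ℕ,
      Relation.ReflTransGen (fun u v : Fin m → ℕ => ∃ i, z i = u ∧ z' i = v) a b →
      Relation.ReflTransGen (fun u v : Fin m → ℕ => ∃ i, z i = u ∧ z' i = v) b a) :
    Submodule.span ℝ
        ((fun x : Fin m → ℝ => ∑ i : Fin r, k i •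
          (fun j => ((z' i j : ℝ) - (z i j : ℝ)) * ∏ l, x l ^ z i l)) ''
          {x : Fin m → ℝ | ∀ j, 0 < x j})
      = Submodule.span ℝ
          (Set.range (fun i : Fin r => fun j => ((z' i j : ℝ) - (z i j : ℝ)))) := by
  set v : Fin r → Fin m → ℝ := fun i j => (z' i j : ℝ) - (z i j : ℝ)
  have hf (x : Fin m → ℝ) :
      (∑ i, k i • fun j => ((z' i j : ℝ) - (z i j : ℝ)) * ∏ l, x l ^ z i l) =
      ∑ i, (k i * ∏ l, x l ^ z i l) • v i := by
    refine sum_congr rfl fun i _ => funext fun j => ?_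
    simp only [Pi.smul_apply, smul_eq_mul]
    ring
  refine le_antisymm (Submodule.span_le.2 ?_) (span_le_span_of_forall_dual fun φ hφ => ?_)
  · rintro _ ⟨x, -, rfl⟩
    beta_reduce
    rw [SetLike.mem_coe, hf]
    exact Submodule.sum_mem _ fun i _ => Submodule.smul_mem _ _ (Submodule.subset_span ⟨i, rfl⟩)
  let g : (Fin m → ℕ) → ℝ := fun u => φ fun j => (u j : ℝ)
  have hφv (i : Fin r) : φ (v i) = g (z' i) - g (z i) := by
    rw [← map_sub]
    rfl
  have hbal (u : Fin m → ℕ) : ∑ i with z i = u, k i * (g (z' i) - g (z i)) = 0 := by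
    refine sum_filter_eq_zero_of_forall_pos_sum_mul_prod_pow_eq_zero z _ (fun x hx => ?_) u
    rw [← hφ _ ⟨x, hx, rfl⟩]
    beta_reduce
    rw [hf, map_sum]
    refine sum_congr rfl fun i _ => ?_
    rw [map_smul, smul_eq_mul, hφv]
    ring
  rintro _ ⟨i, rfl⟩
  rw [hφv, apply_target_eq_apply_source_of_weaklyReversible hk hwr hbal i, sub_self]

/-- Paper: Lemma 2.1, from Feinberg–Horn. For a weakly reversible
mass-action system the kinetic subspace `span{f(x) : x ∈ ℝ^m_{>0}}` equals the
stoichiometric subspace `span{z'_i − z_i}`. Weak reversibility: whenever there is a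
directed path of reactions from one complex to another, there is a directed path back. -/
theorem kinetic_subspace_eq_stoichiometric_subspace_of_weakly_reversible
    (m r : ℕ)
    (z z' : Fin r → Fin m → ℕ) (hzz : ∀ i, z i ≠ z' i)
    (k : Fin r → ℝ) (hk : ∀ i, 0 < k i)
    (hwr : ∀ a b : Fin m → ℕ,
      Relation.ReflTransGen (fun u v : Fin m → ℕ => ∃ i, z i = u ∧ z' i = v) a b →
      Relation.ReflTransGen (fun u v : Fin m → ℕ => ∃ i, z i = u ∧ z' i = v) b a) :
    Submodule.span ℝ
        ((fun x : Fin m → ℝ => ∑ i : Fin r, k i •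
          (fun j => ((z' i j : ℝ) - (z i j : ℝ)) * ∏ l, x l ^ z i l)) ''
          {x : Fin m → ℝ | ∀ j, 0 < x j})
      = Submodule.span ℝ
          (Set.range (fun i : Fin r => fun j => ((z' i j : ℝ) - (z i j : ℝ)))) :=
  kinetic_subspace_eq_stoichiometric_subspace_of_weakly_reversible_general m r z z' k hk hwr
end

section
/- Let N be a chemical reaction network on m species with reactions (z_i, z'_i) and rate constants k_i > 0, i = 1,…,r, and mass-action vector field f(x) = Σ_{i=1}^r k_i (z'_i − z_i) x^{z_i}. If there exists x* ∈ ℝ^m_{>0} which is a complex balanced equilibrium, then every x** ∈ ℝ^m_{>0} with f(x**) = 0 is also a complex balanced equilibrium. -/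
open scoped BigOperators

/-- `xs` is a complex balanced point of the mass-action system: for every complex `z0`,
the total inflow rate to `z0` equals the total outflow rate from `z0` at `xs`. -/
def ComplexBalanced (m r : ℕ) (z z' : Fin r → Fin m → ℕ) (k : Fin r → ℝ)
    (xs : Fin m → ℝ) : Prop :=
  ∀ z0 : Fin m → ℕ,
    (∑ i ∈ Finset.univ.filter (fun i => z' i = z0), k i * ∏ j, xs j ^ z i j)
      = (∏ j, xs j ^ z0 j) * ∑ i ∈ Finset.univ.filter (fun i => z i = z0), k i

/-!
Write the equilibrium as `x** = x* · exp μ` and put `a i = ⟨z i, μ⟩`, `b i = ⟨z' i, μ⟩`,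
`w i = k i (x*)^(z i)`. Complex balance at `x*` says that `∑ w i g (z' i) = ∑ w i g (z i)` for every
function `g` of the complexes; with `g v = exp ⟨v, μ⟩` this gives `∑ w i exp (b i) = ∑ w i exp (a i)`.
Pairing `f(x**) = 0` with `μ` gives `∑ w i exp (a i) (b i - a i) = 0`. By strict convexity of `exp`,
`exp (b i) ≥ exp (a i) (1 + b i - a i)` with equality only if `a i = b i`, so these two identities force
`a = b`: `μ` is orthogonal to every reaction vector, and then `x* · exp μ` is again complex balanced.
-/

open Finset Real

theorem prod_mul_exp_pow {ι : Type*} [Fintype ι] (x μ : ι → ℝ) (v : ι → ℕ) :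
    ∏ j, (x j * exp (μ j)) ^ v j = (∏ j, x j ^ v j) * exp (∑ j, (v j : ℝ) * μ j) := by
  rw [exp_sum, ← prod_mul_distrib]
  exact prod_congr rfl fun j _ => by rw [mul_pow, exp_nat_mul]

theorem exists_eq_mul_exp {ι : Type*} {x y : ι → ℝ} (hx : ∀ j, 0 < x j) (hy : ∀ j, 0 < y j) :
    ∃ μ : ι → ℝ, y = fun j => x j * exp (μ j) :=
  ⟨fun j => log (y j / x j), funext fun j => by
    rw [exp_log (div_pos (hy j) (hx j)), mul_div_cancel₀ _ (hx j).ne']⟩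

theorem sum_mul_sub_eq_zero_of_sum_smul_eq_zero {ι ρ : Type*} [Fintype ι] [Fintype ρ]
    (k c : ρ → ℝ) (z z' : ρ → ι → ℕ) (μ : ι → ℝ)
    (h : ∑ i, k i • (fun j => ((z' i j : ℝ) - (z i j : ℝ)) * c i) = 0) :
    ∑ i, k i * c i * (∑ j, (z' i j : ℝ) * μ j - ∑ j, (z i j : ℝ) * μ j) = 0 := by
  have hμ := congrArg (fun f : ι → ℝ => ∑ j, f j * μ j) h
  simp only [Finset.sum_apply, Pi.smul_apply, smul_eq_mul, Pi.zero_apply, zero_mul,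
    sum_const_zero, sum_mul] at hμ
  rw [sum_comm] at hμ
  rw [← hμ]
  refine sum_congr rfl fun i _ => ?_
  rw [← sum_sub_distrib, mul_sum]
  exact sum_congr rfl fun j _ => by ring

theorem exp_mul_one_add_sub_le_exp (a b : ℝ) : exp a * (1 + (b - a)) ≤ exp b := by
  rw [← add_sub_cancel a b, exp_add, add_sub_cancel_left]
  gcongr
  linarith [add_one_le_exp (b - a)]

theorem exp_mul_one_add_sub_lt_exp {a b : ℝ} (h : a ≠ b) : exp a * (1 + (b - a)) < exp b := by
  rw [← add_sub_cancel a b, exp_add, add_sub_cancel_left]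
  gcongr
  linarith [add_one_lt_exp (sub_ne_zero.mpr h.symm)]

theorem eq_of_sum_mul_exp_eq_of_sum_mul_exp_mul_sub_eq_zero {ρ : Type*} [Fintype ρ]
    (w a b : ρ → ℝ) (hw : ∀ i, 0 < w i)
    (hexp : ∑ i, w i * exp (b i) = ∑ i, w i * exp (a i))
    (hdot : ∑ i, w i * exp (a i) * (b i - a i) = 0) :
    a = b := by
  by_contra hne
  obtain ⟨i, hi⟩ := Function.ne_iff.mp hne
  have hlt : ∑ i, w i * (exp (a i) * (1 + (b i - a i))) < ∑ i, w i * exp (b i) :=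
    sum_lt_sum (fun i _ => mul_le_mul_of_nonneg_left (exp_mul_one_add_sub_le_exp _ _) (hw i).le)
      ⟨i, mem_univ i, mul_lt_mul_of_pos_left (exp_mul_one_add_sub_lt_exp hi) (hw i)⟩
  have hsplit : ∑ i, w i * (exp (a i) * (1 + (b i - a i)))
      = ∑ i, w i * exp (a i) + ∑ i, w i * exp (a i) * (b i - a i) := by
    rw [← sum_add_distrib]
    exact sum_congr rfl fun i _ => by ring
  rw [hsplit, hdot, hexp] at hlt
  linarith

section ComplexBalanced

variable {m r : ℕ} {z z' : Fin r → Fin m → ℕ} {k : Fin r → ℝ} {x : Fin m → ℝ}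

theorem complexBalanced_iff_sum_mul_eq :
    ComplexBalanced m r z z' k x ↔ ∀ g : (Fin m → ℕ) → ℝ,
      ∑ i, k i * (∏ j, x j ^ z i j) * g (z' i) = ∑ i, k i * (∏ j, x j ^ z i j) * g (z i) := by
  classical
  constructor
  · intro hx g
    set T := univ.image z' ∪ univ.image z
    have hz' : ∀ i ∈ univ, z' i ∈ T := fun i _ => mem_union_left _ (mem_image_of_mem _ (mem_univ i))
    have hz : ∀ i ∈ univ, z i ∈ T := fun i _ => mem_union_right _ (mem_image_of_mem _ (mem_univ i))
    rw [← sum_fiberwise_of_maps_to hz', ← sum_fiberwise_of_maps_to hz]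
    refine sum_congr rfl fun z0 _ => ?_
    calc ∑ i ∈ univ.filter (fun i => z' i = z0), k i * (∏ j, x j ^ z i j) * g (z' i)
        = (∑ i ∈ univ.filter (fun i => z' i = z0), k i * ∏ j, x j ^ z i j) * g z0 := by
          rw [sum_mul]
          exact sum_congr rfl fun i hi => by rw [(mem_filter.mp hi).2]
      _ = ((∏ j, x j ^ z0 j) * ∑ i ∈ univ.filter (fun i => z i = z0), k i) * g z0 := by
          rw [hx z0]
      _ = ∑ i ∈ univ.filter (fun i => z i = z0), k i * (∏ j, x j ^ z i j) * g (z i) := by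
          rw [mul_sum, sum_mul]
          refine sum_congr rfl fun i hi => ?_
          rw [(mem_filter.mp hi).2]
          ring
  · intro h z0
    have h0 := h fun v => if v = z0 then 1 else 0
    simp only [mul_ite, mul_one, mul_zero] at h0
    rw [← sum_filter, ← sum_filter] at h0
    rw [h0, mul_sum]
    exact sum_congr rfl fun i hi => by rw [(mem_filter.mp hi).2, mul_comm]

theorem ComplexBalanced.mul_exp (hx : ComplexBalanced m r z z' k x) (μ : Fin m → ℝ)
    (hμ : ∀ i, ∑ j, (z i j : ℝ) * μ j = ∑ j, (z' i j : ℝ) * μ j) :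
    ComplexBalanced m r z z' k fun j => x j * exp (μ j) := by
  rw [complexBalanced_iff_sum_mul_eq] at hx ⊢
  intro g
  have h := hx fun v => exp (∑ j, (v j : ℝ) * μ j) * g v
  simp only [prod_mul_exp_pow]
  calc ∑ i, k i * ((∏ j, x j ^ z i j) * exp (∑ j, (z i j : ℝ) * μ j)) * g (z' i)
      = ∑ i, k i * (∏ j, x j ^ z i j) * (exp (∑ j, (z' i j : ℝ) * μ j) * g (z' i)) :=
        sum_congr rfl fun i _ => by rw [hμ i]; ring
    _ = ∑ i, k i * ((∏ j, x j ^ z i j) * exp (∑ j, (z i j : ℝ) * μ j)) * g (z i) := by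
        rw [h]
        exact sum_congr rfl fun i _ => by ring

end ComplexBalanced

theorem complexBalanced_at_all_equilibria_general
    (m r : ℕ)
    (z z' : Fin r → Fin m → ℕ)
    (k : Fin r → ℝ) (hk : ∀ i, 0 < k i)
    (xs : Fin m → ℝ) (hxs_pos : ∀ j, 0 < xs j)
    (hxs : ComplexBalanced m r z z' k xs) :
    ∀ xss : Fin m → ℝ, (∀ j, 0 < xss j) →
      (∑ i : Fin r, k i •
        (fun j => ((z' i j : ℝ) - (z i j : ℝ)) * ∏ l, xss l ^ z i l)) = 0 →
      ComplexBalanced m r z z' k xss := by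
  intro xss hxss_pos hf
  obtain ⟨μ, rfl⟩ := exists_eq_mul_exp hxs_pos hxss_pos
  set a : Fin r → ℝ := fun i => ∑ j, (z i j : ℝ) * μ j
  set b : Fin r → ℝ := fun i => ∑ j, (z' i j : ℝ) * μ j
  set w : Fin r → ℝ := fun i => k i * ∏ j, xs j ^ z i j
  have hw : ∀ i, 0 < w i := fun i =>
    mul_pos (hk i) (prod_pos fun j _ => pow_pos (hxs_pos j) _)
  have hexp : ∑ i, w i * exp (b i) = ∑ i, w i * exp (a i) :=
    complexBalanced_iff_sum_mul_eq.mp hxs fun v => exp (∑ j, (v j : ℝ) * μ j)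
  have hdot : ∑ i, w i * exp (a i) * (b i - a i) = 0 := by
    simp only [prod_mul_exp_pow] at hf
    rw [← sum_mul_sub_eq_zero_of_sum_smul_eq_zero k _ z z' μ hf]
    exact sum_congr rfl fun i _ => by ring
  have hab := eq_of_sum_mul_exp_eq_of_sum_mul_exp_mul_sub_eq_zero w a b hw hexp hdot
  exact hxs.mul_exp μ fun i => congrFun hab i

/-- Paper: Lemma 2.2, from Horn–Jackson, Lemma 5B. If a mass-action
system is complex balanced at some positive concentration, then it is complex balanced at
every positive equilibrium concentration. -/
theorem complexBalanced_at_all_equilibria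
    (m r : ℕ)
    (z z' : Fin r → Fin m → ℕ) (hzz : ∀ i, z i ≠ z' i)
    (k : Fin r → ℝ) (hk : ∀ i, 0 < k i)
    (xs : Fin m → ℝ) (hxs_pos : ∀ j, 0 < xs j)
    (hxs : ComplexBalanced m r z z' k xs) :
    ∀ xss : Fin m → ℝ, (∀ j, 0 < xss j) →
      (∑ i : Fin r, k i •
        (fun j => ((z' i j : ℝ) - (z i j : ℝ)) * ∏ l, xss l ^ z i l)) = 0 →
      ComplexBalanced m r z z' k xss :=
  complexBalanced_at_all_equilibria_general m r z z' k hk xs hxs_pos hxs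
end

section
/- Let N be a chemical reaction network on m species with reactions (z_i, z'_i) and rate constants k_i > 0, i = 1,…,r. If N admits a complex balanced equilibrium x* ∈ ℝ^m_{>0}, then N is weakly reversible. -/
open scoped BigOperators

/-!
Complex balance says that the mass-action flux into each complex equals the flux out of it;
summing over a set `T` of complexes, the total flux of reactions ending in `T` equals that of
reactions starting in `T`. If `T` is the set of complexes reachable from `b`, every reaction
starting in `T` also ends in `T`, so with all fluxes positive the two sets of reactions must
coincide: every reaction ending in `T` starts in `T`. Hence every reaction `c → b` can be
reversed by a path `b ⇝ c`, and then so can every path.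
-/

lemma Relation.ReflTransGen.symm_of_forall_reverse {α : Type*} {r : α → α → Prop}
    (h : ∀ a b, r a b → Relation.ReflTransGen r b a) {a b : α}
    (hab : Relation.ReflTransGen r a b) : Relation.ReflTransGen r b a :=
  Relation.reflTransGen_swap.1 <|
    Relation.reflTransGen_closed (fun u v huv => Relation.reflTransGen_swap.2 (h u v huv)) a b hab

def massActionFlux {m r : ℕ} (z : Fin r → Fin m → ℕ) (k : Fin r → ℝ) (xs : Fin m → ℝ)
    (i : Fin r) : ℝ :=
  k i * ∏ j, xs j ^ z i j

lemma massActionFlux_pos {m r : ℕ} {z : Fin r → Fin m → ℕ} {k : Fin r → ℝ} {xs : Fin m → ℝ}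
    (hk : ∀ i, 0 < k i) (hxs : ∀ j, 0 < xs j) (i : Fin r) : 0 < massActionFlux z k xs i :=
  mul_pos (hk i) (Finset.prod_pos fun j _ => pow_pos (hxs j) _)

namespace ComplexBalanced

variable {m r : ℕ} {z z' : Fin r → Fin m → ℕ} {k : Fin r → ℝ} {xs : Fin m → ℝ}

lemma sum_flux_target_mem_eq_sum_flux_source_mem (hxs : ComplexBalanced m r z z' k xs)
    (T : Finset (Fin m → ℕ)) :
    ∑ i ∈ Finset.univ.filter (fun i => z' i ∈ T), massActionFlux z k xs i
      = ∑ i ∈ Finset.univ.filter (fun i => z i ∈ T), massActionFlux z k xs i := by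
  rw [← Finset.sum_fiberwise_eq_sum_filter _ T z', ← Finset.sum_fiberwise_eq_sum_filter _ T z]
  refine Finset.sum_congr rfl fun c _ => ?_
  show ∑ i ∈ _, k i * ∏ j, xs j ^ z i j = ∑ i ∈ _, k i * ∏ j, xs j ^ z i j
  rw [hxs c, Finset.mul_sum]
  refine Finset.sum_congr rfl fun i hi => ?_
  rw [(Finset.mem_filter.1 hi).2, mul_comm]

lemma source_mem_of_target_mem (hxs : ComplexBalanced m r z z' k xs)
    (hk : ∀ i, 0 < k i) (hxs_pos : ∀ j, 0 < xs j) {T : Finset (Fin m → ℕ)}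
    (hT : ∀ i, z i ∈ T → z' i ∈ T) {i : Fin r} (hi : z' i ∈ T) : z i ∈ T := by
  by_contra hzi
  have hsub : Finset.univ.filter (fun i => z i ∈ T) ⊆ Finset.univ.filter (fun i => z' i ∈ T) :=
    Finset.monotone_filter_right _ fun i _ => hT i
  have hflux_pos := massActionFlux_pos (z := z) hk hxs_pos
  have hlt := Finset.sum_lt_sum_of_subset hsub (by simpa using hi) (by simpa using hzi)
    (hflux_pos i) fun j _ _ => (hflux_pos j).le
  exact hlt.ne' (hxs.sum_flux_target_mem_eq_sum_flux_source_mem T)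

lemma reflTransGen_reverse_of_reaction (hxs : ComplexBalanced m r z z' k xs)
    (hk : ∀ i, 0 < k i) (hxs_pos : ∀ j, 0 < xs j) (i : Fin r) :
    Relation.ReflTransGen (fun u v : Fin m → ℕ => ∃ i, z i = u ∧ z' i = v) (z' i) (z i) := by
  classical
  let R := fun u v : Fin m → ℕ => ∃ i, z i = u ∧ z' i = v
  let T := (Finset.univ.image z').filter (Relation.ReflTransGen R (z' i))
  have hmem (c) : c ∈ T ↔ c ∈ Finset.univ.image z' ∧ Relation.ReflTransGen R (z' i) c :=
    Finset.mem_filter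
  have hclosed : ∀ l, z l ∈ T → z' l ∈ T := fun l hl =>
    (hmem _).2 ⟨Finset.mem_image_of_mem z' (Finset.mem_univ l),
      ((hmem _).1 hl).2.tail ⟨l, rfl, rfl⟩⟩
  have hi : z' i ∈ T := (hmem _).2 ⟨Finset.mem_image_of_mem z' (Finset.mem_univ i), .refl⟩
  exact ((hmem _).1 (hxs.source_mem_of_target_mem hk hxs_pos hclosed hi)).2

end ComplexBalanced

theorem weakly_reversible_of_complexBalanced_general
    (m r : ℕ)
    (z z' : Fin r → Fin m → ℕ)
    (k : Fin r → ℝ) (hk : ∀ i, 0 < k i)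
    (xs : Fin m → ℝ) (hxs_pos : ∀ j, 0 < xs j)
    (hxs : ComplexBalanced m r z z' k xs) :
    ∀ a b : Fin m → ℕ,
      Relation.ReflTransGen (fun u v : Fin m → ℕ => ∃ i, z i = u ∧ z' i = v) a b →
      Relation.ReflTransGen (fun u v : Fin m → ℕ => ∃ i, z i = u ∧ z' i = v) b a := by
  intro a b hab
  refine hab.symm_of_forall_reverse ?_
  rintro _ _ ⟨i, rfl, rfl⟩
  exact hxs.reflTransGen_reverse_of_reaction hk hxs_pos i

/-- Paper: quoted result of Horn, Theorem 2B. A mass-action system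
admitting a positive complex balanced equilibrium is weakly reversible: whenever there is
a directed path of reactions from one complex to another, there is a directed path back. -/
theorem weakly_reversible_of_complexBalanced
    (m r : ℕ)
    (z z' : Fin r → Fin m → ℕ) (hzz : ∀ i, z i ≠ z' i)
    (k : Fin r → ℝ) (hk : ∀ i, 0 < k i)
    (xs : Fin m → ℝ) (hxs_pos : ∀ j, 0 < xs j)
    (hxs : ComplexBalanced m r z z' k xs) :
    ∀ a b : Fin m → ℕ,
      Relation.ReflTransGen (fun u v : Fin m → ℕ => ∃ i, z i = u ∧ z' i = v) a b →
      Relation.ReflTransGen (fun u v : Fin m → ℕ => ∃ i, z i = u ∧ z' i = v) b a :=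
  weakly_reversible_of_complexBalanced_general m r z z' k hk xs hxs_pos hxs
end

section
/- Fix k₁, k₂, k₃ > 0 and consider the system (*) x₁' = −k₁ x₁ + (k₂ + 3k₃) x₂², x₂' = k₁ x₁ − 2(k₂ + k₃) x₂² (the mass-action system of 2A₂ → A₁ (k₂), A₁ → A₂ (k₁), 2A₂ → 3A₁ (k₃)). Then: (a) there exist b₁, b₂, c₁, c₂ > 0 with k₁ = b₁ c₁, k₁ = 2 b₁ c₂, k₂ + 3k₃ = b₂ c₁, and k₂ + k₃ = b₂ c₂ if and only if k₂ = k₃; (b) if k₂ = k₃, then for every differentiable solution (x₁, x₂) : I → ℝ²_{>0} of (*), the pair (y₁, y₂) := (x₁/2, x₂) satisfies y₁' = −k₁ y₁ + 2k₂ y₂² and y₂' = 2k₁ y₁ − 4k₂ y₂², the mass-action system of A₁ ⇌ 2A₂ with rates k̃₁ = k₁ and k̃₂ = 2k₂. -/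
/-!
The first two conditions give `b₁ c₁ = 2 b₁ c₂`, hence `c₁ = 2 c₂`; the last two then read
`k₂ + 3 k₃ = 2 (k₂ + k₃)`, i.e. `k₂ = k₃`. Conversely, for `k₂ = k₃` one may take
`b₁ = 1`, `c₁ = k₁`, `c₂ = k₁ / 2`, `b₂ = 4 k₂ / k₁`. The conjugacy `(x₁, x₂) ↦ (x₁ / 2, x₂)`
only halves the first equation, and for `k₃ = k₂` the rates `k₂ + 3 k₃ = 4 k₂` and
`2 (k₂ + k₃) = 4 k₂` are exactly those of `A₁ ⇌ 2A₂` with rates `k₁` and `2 k₂`.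
-/

def Example2ConjugacyConditions (k₁ k₂ k₃ : ℝ) : Prop :=
  ∃ b₁ b₂ c₁ c₂ : ℝ, 0 < b₁ ∧ 0 < b₂ ∧ 0 < c₁ ∧ 0 < c₂ ∧
    k₁ = b₁ * c₁ ∧ k₁ = 2 * b₁ * c₂ ∧
    k₂ + 3 * k₃ = b₂ * c₁ ∧ k₂ + k₃ = b₂ * c₂

namespace Example2ConjugacyConditions

theorem eq {k₁ k₂ k₃ : ℝ} (h : Example2ConjugacyConditions k₁ k₂ k₃) : k₂ = k₃ := by
  obtain ⟨b₁, b₂, c₁, c₂, hb₁, -, -, -, h₁, h₂, h₃, h₄⟩ := h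
  have hc : c₁ = 2 * c₂ := by
    apply mul_left_cancel₀ hb₁.ne'
    linarith
  have : k₂ + 3 * k₃ = 2 * (k₂ + k₃) := by rw [h₃, h₄, hc]; ring
  linarith

theorem of_eq {k₁ k₂ : ℝ} (hk₁ : 0 < k₁) (hk₂ : 0 < k₂) :
    Example2ConjugacyConditions k₁ k₂ k₂ := by
  refine ⟨1, 4 * k₂ / k₁, k₁, k₁ / 2, one_pos, by positivity, hk₁, by positivity,
    by ring, by ring, ?_, ?_⟩ <;> field_simp <;> ring

theorem iff {k₁ k₂ k₃ : ℝ} (hk₁ : 0 < k₁) (hk₂ : 0 < k₂) :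
    Example2ConjugacyConditions k₁ k₂ k₃ ↔ k₂ = k₃ :=
  ⟨eq, fun h => h ▸ of_eq hk₁ hk₂⟩

end Example2ConjugacyConditions

section ConjugateSystem

variable {f : ℝ → ℝ} {s : Set ℝ} {t a b g q : ℝ}

theorem HasDerivWithinAt.half_of_rate_four_mul
    (hf : HasDerivWithinAt f (-a * f t + (b + 3 * b) * q) s t) :
    HasDerivWithinAt (fun u => f u / 2) (-a * (f t / 2) + 2 * b * q) s t :=
  (hf.div_const 2).congr_deriv (by ring)

theorem HasDerivWithinAt.of_rate_four_mul
    (hf : HasDerivWithinAt f (a * g - 2 * (b + b) * q) s t) :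
    HasDerivWithinAt f (2 * a * (g / 2) - 4 * b * q) s t :=
  hf.congr_deriv (by ring)

end ConjugateSystem

theorem example2_conjugacy_iff_and_conjugate_system_general
    (k₁ k₂ k₃ : ℝ) (hk₁ : 0 < k₁) (hk₂ : 0 < k₂) :
    ((∃ b₁ b₂ c₁ c₂ : ℝ, 0 < b₁ ∧ 0 < b₂ ∧ 0 < c₁ ∧ 0 < c₂ ∧
        k₁ = b₁ * c₁ ∧ k₁ = 2 * b₁ * c₂ ∧
        k₂ + 3 * k₃ = b₂ * c₁ ∧ k₂ + k₃ = b₂ * c₂)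
      ↔ k₂ = k₃) ∧
    (k₂ = k₃ →
      ∀ (I : Set ℝ), I.OrdConnected →
      ∀ x₁ x₂ : ℝ → ℝ, (∀ t ∈ I, 0 < x₁ t ∧ 0 < x₂ t) →
        (∀ t ∈ I, HasDerivWithinAt x₁
          (-k₁ * x₁ t + (k₂ + 3 * k₃) * (x₂ t) ^ 2) I t) →
        (∀ t ∈ I, HasDerivWithinAt x₂
          (k₁ * x₁ t - 2 * (k₂ + k₃) * (x₂ t) ^ 2) I t) →
        (∀ t ∈ I, HasDerivWithinAt (fun s => x₁ s / 2)
          (-k₁ * (x₁ t / 2) + 2 * k₂ * (x₂ t) ^ 2) I t) ∧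
        (∀ t ∈ I, HasDerivWithinAt x₂
          (2 * k₁ * (x₁ t / 2) - 4 * k₂ * (x₂ t) ^ 2) I t)) := by
  refine ⟨Example2ConjugacyConditions.iff hk₁ hk₂, ?_⟩
  rintro rfl I - x₁ x₂ - hx₁ hx₂
  exact ⟨fun t ht => (hx₁ t ht).half_of_rate_four_mul,
    fun t ht => (hx₂ t ht).of_rate_four_mul⟩

/-- Paper: Example 2 of Section 3.3. For the mass-action system of
`2A₂ → A₁ (k₂)`, `A₁ → A₂ (k₁)`, `2A₂ → 3A₁ (k₃)`:
(a) the linear-conjugacy conditions `k₁ = b₁c₁`, `k₁ = 2b₁c₂`, `k₂+3k₃ = b₂c₁`,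
`k₂+k₃ = b₂c₂` admit positive solutions iff `k₂ = k₃`;
(b) if `k₂ = k₃`, then `(y₁, y₂) = (x₁/2, x₂)` maps positive solutions to solutions of
the mass-action system of `A₁ ⇌ 2A₂` with rates `k̃₁ = k₁`, `k̃₂ = 2k₂`. -/
theorem example2_conjugacy_iff_and_conjugate_system
    (k₁ k₂ k₃ : ℝ) (hk₁ : 0 < k₁) (hk₂ : 0 < k₂) (hk₃ : 0 < k₃) :
    ((∃ b₁ b₂ c₁ c₂ : ℝ, 0 < b₁ ∧ 0 < b₂ ∧ 0 < c₁ ∧ 0 < c₂ ∧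
        k₁ = b₁ * c₁ ∧ k₁ = 2 * b₁ * c₂ ∧
        k₂ + 3 * k₃ = b₂ * c₁ ∧ k₂ + k₃ = b₂ * c₂)
      ↔ k₂ = k₃) ∧
    (k₂ = k₃ →
      ∀ (I : Set ℝ), I.OrdConnected →
      ∀ x₁ x₂ : ℝ → ℝ, (∀ t ∈ I, 0 < x₁ t ∧ 0 < x₂ t) →
        (∀ t ∈ I, HasDerivWithinAt x₁
          (-k₁ * x₁ t + (k₂ + 3 * k₃) * (x₂ t) ^ 2) I t) →
        (∀ t ∈ I, HasDerivWithinAt x₂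
          (k₁ * x₁ t - 2 * (k₂ + k₃) * (x₂ t) ^ 2) I t) →
        (∀ t ∈ I, HasDerivWithinAt (fun s => x₁ s / 2)
          (-k₁ * (x₁ t / 2) + 2 * k₂ * (x₂ t) ^ 2) I t) ∧
        (∀ t ∈ I, HasDerivWithinAt x₂
          (2 * k₁ * (x₁ t / 2) - 4 * k₂ * (x₂ t) ^ 2) I t)) :=
  example2_conjugacy_iff_and_conjugate_system_general k₁ k₂ k₃ hk₁ hk₂
end

section
/- Fix k₁, k₂, k₃ > 0 and consider the planar system x₁' = −k₁ x₁ + (k₂ + 3k₃) x₂², x₂' = k₁ x₁ − 2(k₂ + k₃) x₂². Then: (a) if k₂ > k₃, every differentiable solution (x₁, x₂) : [0,∞) → ℝ²_{>0} satisfies (x₁(t), x₂(t)) → (0,0) as t → ∞; (b) if k₃ > k₂, no differentiable solution (x₁, x₂) : [0,∞) → ℝ²_{>0} is bounded. -/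
/-!
Put `s = k₂ + 3k₃` and `V = (3k₂ + 5k₃) x₁ + 2s x₂`. Along solutions
`V' = (k₃ - k₂) (k₁ x₁ + s x₂²)`, and as long as `x₁` stays bounded, `k₁ x₁ + s x₂²` dominates
a multiple of `V²`. So `V` obeys a Riccati inequality `V' ≤ -c V²` when `k₂ > k₃` (first `V` is
nonincreasing, which bounds `x₁`; then `V` decays like `1/t`), and `V' ≥ c V²` when `k₃ > k₂`
under a bound on the solution, which forces `V` to blow up in finite time.
-/

open Set Filter Topology

lemma monotoneOn_of_hasDerivWithinAt_nonneg' {D : Set ℝ} (hD : Convex ℝ D) {f f' : ℝ → ℝ}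
    (hf : ∀ x ∈ D, HasDerivWithinAt f (f' x) D x) (hf' : ∀ x ∈ D, 0 ≤ f' x) :
    MonotoneOn f D :=
  monotoneOn_of_hasDerivWithinAt_nonneg hD (fun x hx => (hf x hx).continuousWithinAt)
    (fun x hx => (hf x (interior_subset hx)).mono interior_subset)
    (fun x hx => hf' x (interior_subset hx))

lemma antitoneOn_of_hasDerivWithinAt_nonpos' {D : Set ℝ} (hD : Convex ℝ D) {f f' : ℝ → ℝ}
    (hf : ∀ x ∈ D, HasDerivWithinAt f (f' x) D x) (hf' : ∀ x ∈ D, f' x ≤ 0) :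
    AntitoneOn f D :=
  antitoneOn_of_hasDerivWithinAt_nonpos hD (fun x hx => (hf x hx).continuousWithinAt)
    (fun x hx => (hf x (interior_subset hx)).mono interior_subset)
    (fun x hx => hf' x (interior_subset hx))

section Riccati

variable {W W' : ℝ → ℝ}

lemma hasDerivWithinAt_inv_add_mul (hW : ∀ t, 0 ≤ t → 0 < W t)
    (hW' : ∀ t, 0 ≤ t → HasDerivWithinAt W (W' t) (Ici 0) t) (c : ℝ) :
    ∀ t, 0 ≤ t → HasDerivWithinAt (fun t => (W t)⁻¹ + c * t) (-W' t / W t ^ 2 + c) (Ici 0) t :=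
  fun t ht => ((hW' t ht).inv (hW t ht).ne').add
    (((hasDerivWithinAt_id t _).const_mul c).congr_deriv (mul_one c))

lemma inv_add_mul_le_inv_of_deriv_le_neg_mul_sq (hW : ∀ t, 0 ≤ t → 0 < W t)
    (hW' : ∀ t, 0 ≤ t → HasDerivWithinAt W (W' t) (Ici 0) t) {c : ℝ}
    (hric : ∀ t, 0 ≤ t → W' t ≤ -c * W t ^ 2) {t : ℝ} (ht : 0 ≤ t) :
    (W 0)⁻¹ + c * t ≤ (W t)⁻¹ := by
  have hmono := monotoneOn_of_hasDerivWithinAt_nonneg' (convex_Ici 0)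
    (hasDerivWithinAt_inv_add_mul hW hW' (-c)) fun s hs => by
      have hWs := hW s hs
      rw [← sub_eq_add_neg, sub_nonneg, le_div_iff₀ (by positivity)]
      linarith [hric s hs]
  have := hmono self_mem_Ici ht ht
  simp only [mul_zero, add_zero] at this
  linarith

lemma inv_add_mul_le_inv_of_mul_sq_le_deriv (hW : ∀ t, 0 ≤ t → 0 < W t)
    (hW' : ∀ t, 0 ≤ t → HasDerivWithinAt W (W' t) (Ici 0) t) {c : ℝ}
    (hric : ∀ t, 0 ≤ t → c * W t ^ 2 ≤ W' t) {t : ℝ} (ht : 0 ≤ t) :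
    (W t)⁻¹ + c * t ≤ (W 0)⁻¹ := by
  have hanti := antitoneOn_of_hasDerivWithinAt_nonpos' (convex_Ici 0)
    (hasDerivWithinAt_inv_add_mul hW hW' c) fun s hs => by
      have hWs := hW s hs
      rw [← le_neg_iff_add_nonpos_right, div_le_iff₀ (by positivity)]
      linarith [hric s hs]
  simpa using hanti self_mem_Ici ht ht

lemma tendsto_zero_of_deriv_le_neg_mul_sq (hW : ∀ t, 0 ≤ t → 0 < W t)
    (hW' : ∀ t, 0 ≤ t → HasDerivWithinAt W (W' t) (Ici 0) t) {c : ℝ} (hc : 0 < c)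
    (hric : ∀ t, 0 ≤ t → W' t ≤ -c * W t ^ 2) :
    Tendsto W atTop (𝓝 0) := by
  have hbound : Tendsto (fun t => ((W 0)⁻¹ + c * t)⁻¹) atTop (𝓝 0) :=
    (tendsto_atTop_add_const_left _ _ (tendsto_id.const_mul_atTop hc)).inv_tendsto_atTop
  refine tendsto_of_tendsto_of_tendsto_of_le_of_le' tendsto_const_nhds hbound ?_ ?_
    <;> filter_upwards [eventually_ge_atTop 0] with t ht
  · exact (hW t ht).le
  · have := hW 0 le_rfl
    simpa using inv_anti₀ (by positivity)
      (inv_add_mul_le_inv_of_deriv_le_neg_mul_sq hW hW' hric ht)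

lemma false_of_mul_sq_le_deriv (hW : ∀ t, 0 ≤ t → 0 < W t)
    (hW' : ∀ t, 0 ≤ t → HasDerivWithinAt W (W' t) (Ici 0) t) {c : ℝ} (hc : 0 < c)
    (hric : ∀ t, 0 ≤ t → c * W t ^ 2 ≤ W' t) : False := by
  have hW0 := hW 0 le_rfl
  have hT : 0 ≤ (W 0)⁻¹ / c := by positivity
  have := inv_add_mul_le_inv_of_mul_sq_le_deriv hW hW' hric hT
  rw [mul_div_cancel₀ _ hc.ne'] at this
  linarith [inv_pos.mpr (hW _ hT)]

end Riccati

lemma exists_pos_mul_sq_le {α β : ℝ} (hα : 0 < α) (hβ : 0 < β) (p q B : ℝ) :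
    ∃ c > 0, ∀ x y, 0 ≤ x → x ≤ B → c * (p * x + q * y) ^ 2 ≤ α * x + β * y ^ 2 := by
  set K := 2 * p ^ 2 * |B| / α + 2 * q ^ 2 / β + 1
  have hK : 0 < K := by positivity
  have hKα : 2 * p ^ 2 * |B| ≤ K * α := by
    rw [← div_le_iff₀ hα]; linarith [show 0 ≤ 2 * q ^ 2 / β by positivity]
  have hKβ : 2 * q ^ 2 ≤ K * β := by
    rw [← div_le_iff₀ hβ]; linarith [show 0 ≤ 2 * p ^ 2 * |B| / α by positivity]
  refine ⟨K⁻¹, inv_pos.mpr hK, fun x y hx hxB => ?_⟩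
  rw [inv_mul_le_iff₀ hK]
  calc (p * x + q * y) ^ 2 ≤ 2 * p ^ 2 * x ^ 2 + 2 * q ^ 2 * y ^ 2 := by
        nlinarith [sq_nonneg (p * x - q * y)]
    _ ≤ 2 * p ^ 2 * |B| * x + 2 * q ^ 2 * y ^ 2 := by
        have : x ^ 2 ≤ |B| * x := by nlinarith [le_abs_self B]
        nlinarith [sq_nonneg p]
    _ ≤ K * (α * x + β * y ^ 2) := by nlinarith [sq_nonneg y]

lemma tendsto_nhds_zero_prod_of_add {f g : ℝ → ℝ} {p q : ℝ} (hp : 0 < p) (hq : 0 < q)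
    (hf : ∀ᶠ t in atTop, 0 ≤ f t) (hg : ∀ᶠ t in atTop, 0 ≤ g t)
    (h : Tendsto (fun t => p * f t + q * g t) atTop (𝓝 0)) :
    Tendsto (fun t => (f t, g t)) atTop (𝓝 (0, 0)) := by
  have hf0 : Tendsto f atTop (𝓝 0) := by
    have := h.const_mul p⁻¹
    rw [mul_zero] at this
    refine tendsto_of_tendsto_of_tendsto_of_le_of_le' tendsto_const_nhds this hf ?_
    filter_upwards [hg] with t ht
    rw [← div_eq_inv_mul, le_div_iff₀ hp]
    nlinarith
  have hg0 : Tendsto g atTop (𝓝 0) := by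
    have := h.const_mul q⁻¹
    rw [mul_zero] at this
    refine tendsto_of_tendsto_of_tendsto_of_le_of_le' tendsto_const_nhds this hg ?_
    filter_upwards [hf] with t ht
    rw [← div_eq_inv_mul, le_div_iff₀ hq]
    nlinarith
  exact hf0.prodMk_nhds hg0

structure IsPositiveSolution (k₁ k₂ k₃ : ℝ) (x₁ x₂ : ℝ → ℝ) : Prop where
  pos : ∀ t, 0 ≤ t → 0 < x₁ t ∧ 0 < x₂ t
  hasDerivWithinAt₁ : ∀ t, 0 ≤ t →
    HasDerivWithinAt x₁ (-k₁ * x₁ t + (k₂ + 3 * k₃) * x₂ t ^ 2) (Ici 0) t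
  hasDerivWithinAt₂ : ∀ t, 0 ≤ t →
    HasDerivWithinAt x₂ (k₁ * x₁ t - 2 * (k₂ + k₃) * x₂ t ^ 2) (Ici 0) t

def lyapunov (k₂ k₃ : ℝ) (x₁ x₂ : ℝ → ℝ) (t : ℝ) : ℝ :=
  (3 * k₂ + 5 * k₃) * x₁ t + 2 * (k₂ + 3 * k₃) * x₂ t

namespace IsPositiveSolution

variable {k₁ k₂ k₃ : ℝ} {x₁ x₂ : ℝ → ℝ}

-- The weights are chosen so that both terms of the derivative carry the factor `k₃ - k₂`.
lemma hasDerivWithinAt_lyapunov (h : IsPositiveSolution k₁ k₂ k₃ x₁ x₂) (t : ℝ) (ht : 0 ≤ t) :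
    HasDerivWithinAt (lyapunov k₂ k₃ x₁ x₂)
      ((k₃ - k₂) * (k₁ * x₁ t + (k₂ + 3 * k₃) * x₂ t ^ 2)) (Ici 0) t :=
  (((h.hasDerivWithinAt₁ t ht).const_mul _).add
    ((h.hasDerivWithinAt₂ t ht).const_mul _)).congr_deriv (by ring)

lemma lyapunov_pos (h : IsPositiveSolution k₁ k₂ k₃ x₁ x₂) (hk₂ : 0 < k₂) (hk₃ : 0 < k₃)
    (t : ℝ) (ht : 0 ≤ t) : 0 < lyapunov k₂ k₃ x₁ x₂ t := by
  obtain ⟨h₁, h₂⟩ := h.pos t ht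
  unfold lyapunov
  positivity

lemma exists_pos_mul_sq_lyapunov_le (h : IsPositiveSolution k₁ k₂ k₃ x₁ x₂) (hk₁ : 0 < k₁)
    (hk₂ : 0 < k₂) (hk₃ : 0 < k₃) {B : ℝ} (hB : ∀ t, 0 ≤ t → x₁ t ≤ B) :
    ∃ c > 0, ∀ t, 0 ≤ t →
      c * lyapunov k₂ k₃ x₁ x₂ t ^ 2 ≤ k₁ * x₁ t + (k₂ + 3 * k₃) * x₂ t ^ 2 := by
  obtain ⟨c, hc, hcV⟩ := exists_pos_mul_sq_le hk₁ (by positivity : 0 < k₂ + 3 * k₃)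
    (3 * k₂ + 5 * k₃) (2 * (k₂ + 3 * k₃)) B
  exact ⟨c, hc, fun t ht => hcV _ _ (h.pos t ht).1.le (hB t ht)⟩

theorem tendsto_zero (h : IsPositiveSolution k₁ k₂ k₃ x₁ x₂) (hk₁ : 0 < k₁) (hk₂ : 0 < k₂)
    (hk₃ : 0 < k₃) (hk : k₃ < k₂) :
    Tendsto (fun t => (x₁ t, x₂ t)) atTop (𝓝 (0, 0)) := by
  have hanti : AntitoneOn (lyapunov k₂ k₃ x₁ x₂) (Ici 0) :=
    antitoneOn_of_hasDerivWithinAt_nonpos' (convex_Ici 0) h.hasDerivWithinAt_lyapunov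
      fun t ht => by
        obtain ⟨h₁, h₂⟩ := h.pos t ht
        exact mul_nonpos_of_nonpos_of_nonneg (by linarith) (by positivity)
  have hx₁ : ∀ t, 0 ≤ t → x₁ t ≤ lyapunov k₂ k₃ x₁ x₂ 0 / (3 * k₂ + 5 * k₃) := by
    intro t ht
    have hVt := hanti self_mem_Ici ht ht
    obtain ⟨h₁, h₂⟩ := h.pos t ht
    have hx₂ : 0 < 2 * (k₂ + 3 * k₃) * x₂ t := by positivity
    rw [le_div_iff₀ (by positivity)]
    unfold lyapunov at hVt ⊢
    linarith
  obtain ⟨c, hc, hcV⟩ := h.exists_pos_mul_sq_lyapunov_le hk₁ hk₂ hk₃ hx₁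
  have hV := tendsto_zero_of_deriv_le_neg_mul_sq (h.lyapunov_pos hk₂ hk₃)
    h.hasDerivWithinAt_lyapunov (mul_pos (sub_pos.mpr hk) hc) fun t ht => by
      nlinarith [hcV t ht]
  exact tendsto_nhds_zero_prod_of_add (by positivity) (by positivity)
    (eventually_atTop.mpr ⟨0, fun t ht => (h.pos t ht).1.le⟩)
    (eventually_atTop.mpr ⟨0, fun t ht => (h.pos t ht).2.le⟩) hV

theorem not_bounded (h : IsPositiveSolution k₁ k₂ k₃ x₁ x₂) (hk₁ : 0 < k₁) (hk₂ : 0 < k₂)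
    (hk₃ : 0 < k₃) (hk : k₂ < k₃) :
    ¬ ∃ M : ℝ, ∀ t : ℝ, 0 ≤ t → |x₁ t| ≤ M ∧ |x₂ t| ≤ M := by
  rintro ⟨M, hM⟩
  obtain ⟨c, hc, hcV⟩ := h.exists_pos_mul_sq_lyapunov_le hk₁ hk₂ hk₃
    fun t ht => (abs_le.mp (hM t ht).1).2
  exact false_of_mul_sq_le_deriv (h.lyapunov_pos hk₂ hk₃) h.hasDerivWithinAt_lyapunov
    (mul_pos (sub_pos.mpr hk) hc) fun t ht => by nlinarith [hcV t ht]

end IsPositiveSolution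

/-- Paper: Example 2 of Section 3.3. For the planar system
`x₁' = −k₁x₁ + (k₂+3k₃)x₂²`, `x₂' = k₁x₁ − 2(k₂+k₃)x₂²`:
(a) if `k₂ > k₃` every positive solution on `[0,∞)` tends to the origin;
(b) if `k₃ > k₂` no positive solution on `[0,∞)` is bounded. -/
theorem example2_asymptotic_behaviour
    (k₁ k₂ k₃ : ℝ) (hk₁ : 0 < k₁) (hk₂ : 0 < k₂) (hk₃ : 0 < k₃) :
    (k₂ > k₃ →
      ∀ x₁ x₂ : ℝ → ℝ,
        (∀ t : ℝ, 0 ≤ t → 0 < x₁ t ∧ 0 < x₂ t) →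
        (∀ t : ℝ, 0 ≤ t → HasDerivWithinAt x₁
          (-k₁ * x₁ t + (k₂ + 3 * k₃) * (x₂ t) ^ 2) (Set.Ici 0) t) →
        (∀ t : ℝ, 0 ≤ t → HasDerivWithinAt x₂
          (k₁ * x₁ t - 2 * (k₂ + k₃) * (x₂ t) ^ 2) (Set.Ici 0) t) →
        Filter.Tendsto (fun t => (x₁ t, x₂ t)) Filter.atTop
          (nhds ((0 : ℝ), (0 : ℝ)))) ∧
    (k₃ > k₂ →
      ∀ x₁ x₂ : ℝ → ℝ,
        (∀ t : ℝ, 0 ≤ t → 0 < x₁ t ∧ 0 < x₂ t) →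
        (∀ t : ℝ, 0 ≤ t → HasDerivWithinAt x₁
          (-k₁ * x₁ t + (k₂ + 3 * k₃) * (x₂ t) ^ 2) (Set.Ici 0) t) →
        (∀ t : ℝ, 0 ≤ t → HasDerivWithinAt x₂
          (k₁ * x₁ t - 2 * (k₂ + k₃) * (x₂ t) ^ 2) (Set.Ici 0) t) →
        ¬ ∃ M : ℝ, ∀ t : ℝ, 0 ≤ t → |x₁ t| ≤ M ∧ |x₂ t| ≤ M) :=
  ⟨fun hk _ _ hpos hd₁ hd₂ => (IsPositiveSolution.mk hpos hd₁ hd₂).tendsto_zero hk₁ hk₂ hk₃ hk,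
    fun hk _ _ hpos hd₁ hd₂ => (IsPositiveSolution.mk hpos hd₁ hd₂).not_bounded hk₁ hk₂ hk₃ hk⟩
end

section
/- Fix k₁, k₂, k₃ > 0 and let f : ℝ² → ℝ² be given by f(x₁, x₂) = (−k₁ x₁ + (k₂ + 3k₃) x₂², k₁ x₁ − 2(k₂ + k₃) x₂²). Then the kinetic subspace S* = span{ f(x) : x ∈ ℝ²_{>0} } equals span{(1, −1)} (and hence has dimension 1) if k₂ = k₃, and equals all of ℝ² (dimension 2) if k₂ ≠ k₃. -/
/-!
Writing `f(x₁, x₂) = x₁ • u + x₂² • v` with `u = (-k₁, k₁)` and `v = (k₂ + 3k₃, -2(k₂ + k₃))`,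
the values `f(1, 1) = u + v` and `f(2, 1) = 2u + v` already recover `u` and `v`, so `S*` is the
span of `u` and `v`. When `k₂ = k₃` both are multiples of `(1, -1)`; otherwise
`det(u, v) = k₁ (k₂ - k₃) ≠ 0`.
-/

open Submodule

theorem span_pos_smul_add_sq_smul_eq_span_pair {R M : Type*} [CommRing R] [PartialOrder R]
    [IsStrictOrderedRing R] [AddCommGroup M] [Module R M] (u v : M) :
    span R {p : M | ∃ a b : R, 0 < a ∧ 0 < b ∧ p = a • u + b ^ 2 • v} = span R {u, v} := by
  set S := {p : M | ∃ a b : R, 0 < a ∧ 0 < b ∧ p = a • u + b ^ 2 • v}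
  have h₁ : u + v ∈ span R S := subset_span ⟨1, 1, one_pos, one_pos, by simp⟩
  have h₂ : (2 : R) • u + v ∈ span R S := subset_span ⟨2, 1, two_pos, one_pos, by simp⟩
  apply le_antisymm
  · rw [span_le]
    rintro p ⟨a, b, -, -, rfl⟩
    exact add_mem (smul_mem _ a (subset_span (by simp))) (smul_mem _ _ (subset_span (by simp)))
  · rw [span_le, Set.insert_subset_iff, Set.singleton_subset_iff]
    constructor
    · have hu := sub_mem h₂ h₁
      rwa [two_smul, add_sub_add_right_eq_sub, add_sub_cancel_right] at hu
    · have hv := sub_mem (smul_mem _ 2 h₁) h₂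
      rwa [smul_add, add_sub_add_left_eq_sub, two_smul, add_sub_cancel_right] at hv

theorem span_pair_smul_eq_span_singleton {K M : Type*} [Field K] [AddCommGroup M] [Module K M]
    {a b : K} (ha : a ≠ 0) (w : M) : span K {a • w, b • w} = K ∙ w := by
  rw [span_insert, span_singleton_smul_eq (Ne.isUnit ha)]
  exact sup_eq_left.2 <|
    (span_singleton_le_iff_mem _ _).2 (smul_mem _ b (mem_span_singleton_self w))

theorem span_pair_eq_top_of_det_ne_zero {K : Type*} [Field K] {a b c d : K}
    (hdet : a * d - b * c ≠ 0) : span K {((a, b) : K × K), (c, d)} = ⊤ := by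
  refine eq_top_iff.2 fun ⟨x, y⟩ _ => mem_span_pair.2 ?_
  refine ⟨(x * d - y * c) / (a * d - b * c), (a * y - b * x) / (a * d - b * c), ?_⟩
  have hinv := mul_inv_cancel₀ hdet
  rw [Prod.smul_mk, Prod.smul_mk, Prod.mk_add_mk, Prod.mk.injEq, smul_eq_mul, smul_eq_mul]
  constructor
  · linear_combination x * hinv
  · linear_combination y * hinv

theorem example2_kinetic_subspace_general
    (k₁ k₂ k₃ : ℝ) (hk₁ : 0 < k₁) :
    (k₂ = k₃ →
      Submodule.span ℝ {p : ℝ × ℝ | ∃ x₁ x₂ : ℝ, 0 < x₁ ∧ 0 < x₂ ∧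
          p = (-k₁ * x₁ + (k₂ + 3 * k₃) * x₂ ^ 2,
               k₁ * x₁ - 2 * (k₂ + k₃) * x₂ ^ 2)}
        = Submodule.span ℝ {((1 : ℝ), (-1 : ℝ))}) ∧
    (k₂ ≠ k₃ →
      Submodule.span ℝ {p : ℝ × ℝ | ∃ x₁ x₂ : ℝ, 0 < x₁ ∧ 0 < x₂ ∧
          p = (-k₁ * x₁ + (k₂ + 3 * k₃) * x₂ ^ 2,
               k₁ * x₁ - 2 * (k₂ + k₃) * x₂ ^ 2)}
        = (⊤ : Submodule ℝ (ℝ × ℝ))) := by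
  have hf : ∀ x₁ x₂ : ℝ,
      ((-k₁ * x₁ + (k₂ + 3 * k₃) * x₂ ^ 2, k₁ * x₁ - 2 * (k₂ + k₃) * x₂ ^ 2) : ℝ × ℝ) =
        x₁ • ((-k₁, k₁) : ℝ × ℝ) + x₂ ^ 2 • (k₂ + 3 * k₃, -(2 * (k₂ + k₃))) := by
    intro x₁ x₂
    ext <;> simp only [Prod.fst_add, Prod.snd_add, Prod.smul_fst, Prod.smul_snd, smul_eq_mul] <;> ring
  simp_rw [hf, span_pos_smul_add_sq_smul_eq_span_pair]
  constructor
  · rintro rfl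
    have hu : ((-k₁, k₁) : ℝ × ℝ) = (-k₁) • ((1 : ℝ), (-1 : ℝ)) := by simp
    have hv : ((k₂ + 3 * k₂, -(2 * (k₂ + k₂))) : ℝ × ℝ) = (4 * k₂) • ((1 : ℝ), (-1 : ℝ)) := by
      ext <;> simp only [Prod.smul_fst, Prod.smul_snd, smul_eq_mul] <;> ring
    rw [hu, hv]
    exact span_pair_smul_eq_span_singleton (neg_ne_zero.2 hk₁.ne') _
  · intro hne
    apply span_pair_eq_top_of_det_ne_zero
    have : k₁ * (k₂ - k₃) ≠ 0 := mul_ne_zero hk₁.ne' (sub_ne_zero.2 hne)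
    convert this using 1
    ring

/-- Paper: Example 2 of Section 3.3. For
`f(x₁,x₂) = (−k₁x₁ + (k₂+3k₃)x₂², k₁x₁ − 2(k₂+k₃)x₂²)`, the kinetic subspace
`S* = span{f(x) : x ∈ ℝ²_{>0}}` equals `span{(1,−1)}` if `k₂ = k₃`, and equals all of
`ℝ²` if `k₂ ≠ k₃`. -/
theorem example2_kinetic_subspace
    (k₁ k₂ k₃ : ℝ) (hk₁ : 0 < k₁) (hk₂ : 0 < k₂) (hk₃ : 0 < k₃) :
    (k₂ = k₃ →
      Submodule.span ℝ {p : ℝ × ℝ | ∃ x₁ x₂ : ℝ, 0 < x₁ ∧ 0 < x₂ ∧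
          p = (-k₁ * x₁ + (k₂ + 3 * k₃) * x₂ ^ 2,
               k₁ * x₁ - 2 * (k₂ + k₃) * x₂ ^ 2)}
        = Submodule.span ℝ {((1 : ℝ), (-1 : ℝ))}) ∧
    (k₂ ≠ k₃ →
      Submodule.span ℝ {p : ℝ × ℝ | ∃ x₁ x₂ : ℝ, 0 < x₁ ∧ 0 < x₂ ∧
          p = (-k₁ * x₁ + (k₂ + 3 * k₃) * x₂ ^ 2,
               k₁ * x₁ - 2 * (k₂ + k₃) * x₂ ^ 2)}
        = (⊤ : Submodule ℝ (ℝ × ℝ))) :=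
  example2_kinetic_subspace_general k₁ k₂ k₃ hk₁
end

section
/- Fix ε > 0 and t ∈ [0,1). Let I ⊆ ℝ be an interval and let (x₁, x₂) : I → ℝ²_{>0} be differentiable with x₁' = 2 x₁ x₂ (1 − x₁) and x₂' = 2 x₁ x₂ (x₁ − ε x₂ − x₂²) on I (the mass-action system of A₁+2A₂ → A₁ (rate ε), 2A₁+A₂ → 3A₂ (rate 1), A₁+3A₂ → A₁+A₂ (rate 1), A₁+A₂ → 3A₁+A₂ (rate 1)). Then (y₁, y₂) := (x₁/2, x₂) satisfies y₁' = 2 y₁ y₂ − 4 y₁² y₂ and y₂' = −4ε y₁ y₂² + 8 y₁² y₂ − 4 y₁ y₂³ on I, which is the mass-action system of the weakly reversible network A₁+2A₂ → A₁+A₂ (rate 4ε), A₁+A₂ → 2A₁+A₂ (rate 2), 2A₁+A₂ → A₁+3A₂ (rate 4), A₁+3A₂ → A₁+2A₂ (rate 4(1−t)), A₁+3A₂ → A₁+A₂ (rate 2t). -/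
theorem example3_linear_conjugacy_general
    (ε : ℝ)
    (I : Set ℝ)
    (x₁ x₂ : ℝ → ℝ)
    (hx₁ : ∀ s ∈ I, HasDerivWithinAt x₁
      (2 * x₁ s * x₂ s * (1 - x₁ s)) I s)
    (hx₂ : ∀ s ∈ I, HasDerivWithinAt x₂
      (2 * x₁ s * x₂ s * (x₁ s - ε * x₂ s - (x₂ s) ^ 2)) I s) :
    (∀ s ∈ I, HasDerivWithinAt (fun u => x₁ u / 2)
      (2 * (x₁ s / 2) * x₂ s - 4 * (x₁ s / 2) ^ 2 * x₂ s) I s) ∧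
    (∀ s ∈ I, HasDerivWithinAt x₂
      (-(4 * ε) * (x₁ s / 2) * (x₂ s) ^ 2 + 8 * (x₁ s / 2) ^ 2 * x₂ s
        - 4 * (x₁ s / 2) * (x₂ s) ^ 3) I s) := by
  refine ⟨fun s hs => ((hx₁ s hs).div_const 2).congr_deriv ?_,
    fun s hs => (hx₂ s hs).congr_deriv ?_⟩ <;> ring

/-- Paper: Example 3 of Section 3.3. Every positive solution of
`x₁' = 2x₁x₂(1 − x₁)`, `x₂' = 2x₁x₂(x₁ − εx₂ − x₂²)` is mapped by
`(y₁,y₂) = (x₁/2, x₂)` to a solution of `y₁' = 2y₁y₂ − 4y₁²y₂`,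
`y₂' = −4εy₁y₂² + 8y₁²y₂ − 4y₁y₂³`, the mass-action system of the weakly reversible
target network with the reaction from `A₁+3A₂` split into two weighted reactions
(weight parameter `t ∈ [0,1)`). -/
theorem example3_linear_conjugacy
    (ε : ℝ) (hε : 0 < ε) (t : ℝ) (ht0 : 0 ≤ t) (ht1 : t < 1)
    (I : Set ℝ) (hI : I.OrdConnected)
    (x₁ x₂ : ℝ → ℝ)
    (hpos : ∀ s ∈ I, 0 < x₁ s ∧ 0 < x₂ s)
    (hx₁ : ∀ s ∈ I, HasDerivWithinAt x₁
      (2 * x₁ s * x₂ s * (1 - x₁ s)) I s)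
    (hx₂ : ∀ s ∈ I, HasDerivWithinAt x₂
      (2 * x₁ s * x₂ s * (x₁ s - ε * x₂ s - (x₂ s) ^ 2)) I s) :
    (∀ s ∈ I, HasDerivWithinAt (fun u => x₁ u / 2)
      (2 * (x₁ s / 2) * x₂ s - 4 * (x₁ s / 2) ^ 2 * x₂ s) I s) ∧
    (∀ s ∈ I, HasDerivWithinAt x₂
      (-(4 * ε) * (x₁ s / 2) * (x₂ s) ^ 2 + 8 * (x₁ s / 2) ^ 2 * x₂ s
        - 4 * (x₁ s / 2) * (x₂ s) ^ 3) I s) :=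
  example3_linear_conjugacy_general ε I x₁ x₂ hx₁ hx₂
end

section
/- Fix k > 0, let I ⊆ ℝ be an interval, and let (x₁, x₂) : I → ℝ²_{>0} be differentiable with x₁' = −k x₁ and x₂' = k x₁ on I. Define y₁ = x₁² x₂^{−3} and y₂ = x₁^{−1} x₂². Then (y₁, y₂) takes values in ℝ²_{>0} and satisfies y₁' = −2k y₁ − 3k y₁² y₂ and y₂' = k y₂ + 2k y₁ y₂² on I; that is, the nonlinear map (x₁,x₂) ↦ (x₁² x₂^{−3}, x₁^{−1} x₂²) sends solutions of the mass-action system of A₁ → A₂ (rate k) to solutions of the mass-action system of A₁ → 0 (rate 2k), A₂ → 2A₂ (rate k), 2A₁+A₂ → A₁+A₂ (rate 3k), A₁+2A₂ → A₁+3A₂ (rate 2k). -/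
/-!
Along any curve with nonvanishing coordinates, the monomial `x₁ ^ a * x₂ ^ b` has logarithmic
derivative `a x₁'/x₁ + b x₂'/x₂`. For `x₁' = -k x₁`, `x₂' = k x₁` this is `-a k + b k x₁/x₂`,
and `x₁/x₂ = y₁ y₂` rewrites the right-hand sides as polynomials in `y₁, y₂`.
-/

theorem HasDerivWithinAt.zpow_mul_zpow {𝕜 : Type*} [NontriviallyNormedField 𝕜]
    {f g : 𝕜 → 𝕜} {f' g' t : 𝕜} {s : Set 𝕜}
    (hf : HasDerivWithinAt f f' s t) (hg : HasDerivWithinAt g g' s t)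
    (hf0 : f t ≠ 0) (hg0 : g t ≠ 0) (a b : ℤ) :
    HasDerivWithinAt (fun u => f u ^ a * g u ^ b)
      ((a * f' / f t + b * g' / g t) * (f t ^ a * g t ^ b)) s t := by
  have hfa := (hasDerivAt_zpow a (f t) (Or.inl hf0)).comp_hasDerivWithinAt t hf
  have hgb := (hasDerivAt_zpow b (g t) (Or.inl hg0)).comp_hasDerivWithinAt t hg
  refine (hfa.mul hgb).congr_deriv ?_
  simp only [Function.comp_apply, zpow_sub_one₀ hf0, zpow_sub_one₀ hg0]
  field_simp

theorem appendix_nonlinear_conjugacy_general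
    (k : ℝ)
    (I : Set ℝ)
    (x₁ x₂ : ℝ → ℝ)
    (hpos : ∀ t ∈ I, 0 < x₁ t ∧ 0 < x₂ t)
    (hx₁ : ∀ t ∈ I, HasDerivWithinAt x₁ (-k * x₁ t) I t)
    (hx₂ : ∀ t ∈ I, HasDerivWithinAt x₂ (k * x₁ t) I t) :
    (∀ t ∈ I, 0 < (x₁ t) ^ 2 * (x₂ t) ^ (-3 : ℤ) ∧
      0 < (x₁ t) ^ (-1 : ℤ) * (x₂ t) ^ 2) ∧
    (∀ t ∈ I, HasDerivWithinAt (fun s => (x₁ s) ^ 2 * (x₂ s) ^ (-3 : ℤ))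
      (-(2 * k) * ((x₁ t) ^ 2 * (x₂ t) ^ (-3 : ℤ))
        - 3 * k * ((x₁ t) ^ 2 * (x₂ t) ^ (-3 : ℤ)) ^ 2
          * ((x₁ t) ^ (-1 : ℤ) * (x₂ t) ^ 2)) I t) ∧
    (∀ t ∈ I, HasDerivWithinAt (fun s => (x₁ s) ^ (-1 : ℤ) * (x₂ s) ^ 2)
      (k * ((x₁ t) ^ (-1 : ℤ) * (x₂ t) ^ 2)
        + 2 * k * ((x₁ t) ^ 2 * (x₂ t) ^ (-3 : ℤ))
          * ((x₁ t) ^ (-1 : ℤ) * (x₂ t) ^ 2) ^ 2) I t) := by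
  refine ⟨fun t ht => ?_, fun t ht => ?_, fun t ht => ?_⟩ <;>
    obtain ⟨h₁, h₂⟩ := hpos t ht
  · exact ⟨by positivity, by positivity⟩
  · have hy₁ := (hx₁ t ht).zpow_mul_zpow (hx₂ t ht) h₁.ne' h₂.ne' 2 (-3)
    simp only [zpow_ofNat] at hy₁
    refine hy₁.congr_deriv ?_
    push_cast
    field_simp
    ring
  · have hy₂ := (hx₁ t ht).zpow_mul_zpow (hx₂ t ht) h₁.ne' h₂.ne' (-1) 2
    simp only [zpow_ofNat] at hy₂
    refine hy₂.congr_deriv ?_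
    push_cast
    field_simp

/-- Paper: Appendix, second nonlinear-conjugacy example. The nonlinear
map `(x₁,x₂) ↦ (x₁²x₂⁻³, x₁⁻¹x₂²)` sends positive solutions of the mass-action system of
`A₁ → A₂` (rate `k`), i.e. `x₁' = −kx₁`, `x₂' = kx₁`, to positive solutions of
`y₁' = −2ky₁ − 3ky₁²y₂`, `y₂' = ky₂ + 2ky₁y₂²`, the mass-action system of
`A₁ → 0 (2k)`, `A₂ → 2A₂ (k)`, `2A₁+A₂ → A₁+A₂ (3k)`, `A₁+2A₂ → A₁+3A₂ (2k)`. -/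
theorem appendix_nonlinear_conjugacy
    (k : ℝ) (hk : 0 < k)
    (I : Set ℝ) (hI : I.OrdConnected)
    (x₁ x₂ : ℝ → ℝ)
    (hpos : ∀ t ∈ I, 0 < x₁ t ∧ 0 < x₂ t)
    (hx₁ : ∀ t ∈ I, HasDerivWithinAt x₁ (-k * x₁ t) I t)
    (hx₂ : ∀ t ∈ I, HasDerivWithinAt x₂ (k * x₁ t) I t) :
    (∀ t ∈ I, 0 < (x₁ t) ^ 2 * (x₂ t) ^ (-3 : ℤ) ∧
      0 < (x₁ t) ^ (-1 : ℤ) * (x₂ t) ^ 2) ∧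
    (∀ t ∈ I, HasDerivWithinAt (fun s => (x₁ s) ^ 2 * (x₂ s) ^ (-3 : ℤ))
      (-(2 * k) * ((x₁ t) ^ 2 * (x₂ t) ^ (-3 : ℤ))
        - 3 * k * ((x₁ t) ^ 2 * (x₂ t) ^ (-3 : ℤ)) ^ 2
          * ((x₁ t) ^ (-1 : ℤ) * (x₂ t) ^ 2)) I t) ∧
    (∀ t ∈ I, HasDerivWithinAt (fun s => (x₁ s) ^ (-1 : ℤ) * (x₂ s) ^ 2)
      (k * ((x₁ t) ^ (-1 : ℤ) * (x₂ t) ^ 2)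
        + 2 * k * ((x₁ t) ^ 2 * (x₂ t) ^ (-3 : ℤ))
          * ((x₁ t) ^ (-1 : ℤ) * (x₂ t) ^ 2) ^ 2) I t) :=
  appendix_nonlinear_conjugacy_general k I x₁ x₂ hpos hx₁ hx₂
end
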